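/- arXiv:2302.00435 — 4 statements merged into one kernel-verified Lean document; each statement's English description precedes it below -/
import Mathlib

section
/- Let F be a complex-valued function holomorphic on the open right half-plane ℂ₊ = {z ∈ ℂ : Re z > 0}. Assume there are constants a₁, a₂ > 0, b₁ ≥ 0 and b₂ ∈ (0,1] such that |F(z)| ≤ a₁ (Re z)^{−b₁} for all z ∈ ℂ₊, and |F(t)| ≤ a₁ t^{−b₁} exp(−a₂ t^{−b₂}) for all real t > 0. Then for every z ∈ ℂ₊, |F(z)| ≤ a₁ 2^{b₁} (Re z)^{−b₁} exp(−(a₂ b₂ / 2) |z|^{−b₂−1} Re z). -/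
/-!
By the symmetry `F ↦ conj ∘ F ∘ conj` it suffices to treat `z = r e^{iθ}` with `0 ≤ θ < π/2`.
Choose `φ ∈ [θ, π/2)` with `cos φ = cos θ / 2` and put `c = a₂ / sin (b₂ φ)`. In logarithmic
coordinates consider `e^{b₁ ζ} F(e^ζ) exp(-i c e^{b₂(iφ - ζ)})`; its last factor has modulus
`exp(c e^{-b₂ Re ζ} sin(b₂(φ - Im ζ)))`. On `Im ζ = 0` this factor exactly cancels the decay of `F`
on the positive axis, and on `Im ζ = φ` it has modulus one, so on both edges of the strip
`0 ≤ Im ζ ≤ φ` the function is bounded by `a₁ (cos φ)^{-b₁} = a₁ 2^{b₁} (cos θ)^{-b₁}`. Inside, it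
grows at most like `exp(|c| e^{b₂ |Re ζ|})` with `b₂ < π / φ`, so Phragmén–Lindelöf extends the
bound to `ζ = log z`. Finally `b₂ (cos θ / 2) sin(b₂ φ) ≤ sin(b₂(φ - θ))`, from the concavity of
`sin` and `sin (φ - θ) ≥ (cos θ / 2) sin φ`, bounds the modulus of the last factor at `log z`
below by `exp((a₂ b₂ / 2) r^{-b₂} cos θ)`.
-/

open Complex Set Filter Asymptotics
open scoped Real ComplexConjugate

lemma DifferentiableOn.conj_conj_of_isOpen {f : ℂ → ℂ} {s : Set ℂ}
    (hf : DifferentiableOn ℂ f s) (hs : IsOpen s) :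
    DifferentiableOn ℂ (conj ∘ f ∘ conj) (conj ⁻¹' s) := fun _ hw =>
  (differentiableAt_conj_conj_iff.2 (hf.differentiableAt (hs.mem_nhds hw))).differentiableWithinAt

lemma mul_cos_mul_sin_le_sin_mul_sub {b θ φ : ℝ} (hb₀ : 0 < b) (hb₁ : b ≤ 1) (hθ : 0 ≤ θ)
    (hθφ : θ ≤ φ) (hφ : φ ≤ π / 2) (hcos : Real.cos φ = Real.cos θ / 2) :
    b * (Real.cos θ / 2) * Real.sin (b * φ) ≤ Real.sin (b * (φ - θ)) := by
  have hsin_mono : MonotoneOn Real.sin (Icc 0 (π / 2)) :=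
    Real.strictMonoOn_sin.monotoneOn.mono (Icc_subset_Icc (by linarith [Real.pi_pos]) le_rfl)
  have hbφ : Real.sin (b * φ) ≤ Real.sin φ :=
    hsin_mono ⟨mul_nonneg hb₀.le (by linarith), by nlinarith⟩ ⟨by linarith, hφ⟩ (by nlinarith)
  have hθφ' : Real.sin θ ≤ Real.sin φ := hsin_mono ⟨hθ, by linarith⟩ ⟨by linarith, hφ⟩ hθφ
  have hcosθ : 0 ≤ Real.cos θ := Real.cos_nonneg_of_mem_Icc ⟨by linarith, by linarith⟩
  have hconc : b * Real.sin (φ - θ) ≤ Real.sin (b * (φ - θ)) := by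
    simpa using strictConcaveOn_sin_Icc.concaveOn.2 (x := φ - θ) (y := 0)
      ⟨by linarith, by linarith [Real.pi_pos]⟩ ⟨le_rfl, Real.pi_pos.le⟩ hb₀.le
      (sub_nonneg.2 hb₁) (by ring)
  calc b * (Real.cos θ / 2) * Real.sin (b * φ) ≤ b * (Real.cos θ / 2 * Real.sin φ) := by
        rw [mul_assoc]; gcongr
    _ ≤ b * Real.sin (φ - θ) := by
        gcongr
        rw [Real.sin_sub, hcos]
        nlinarith
    _ ≤ _ := hconc

lemma arccos_cos_div_two_mem_Ioo {θ : ℝ} (hθ : 0 < Real.cos θ) :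
    Real.arccos (Real.cos θ / 2) ∈ Ioo 0 (π / 2) :=
  ⟨Real.arccos_pos.2 (by linarith [Real.cos_le_one θ]), Real.arccos_lt_pi_div_two.2 (by positivity)⟩

lemma le_arccos_cos_div_two {θ : ℝ} (hθ₀ : 0 ≤ θ) (hθ : θ ≤ π / 2) :
    θ ≤ Real.arccos (Real.cos θ / 2) :=
  calc θ = Real.arccos (Real.cos θ) := (Real.arccos_cos hθ₀ (by linarith [Real.pi_pos])).symm
    _ ≤ Real.arccos (Real.cos θ / 2) :=
      Real.arccos_le_arccos (by linarith [Real.cos_nonneg_of_mem_Icc ⟨by linarith, hθ⟩])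

variable {F : ℂ → ℂ} {a₁ a₂ b₁ b₂ c φ : ℝ}

noncomputable def stripAux (F : ℂ → ℂ) (b₁ b₂ c φ : ℝ) (ζ : ℂ) : ℂ :=
  exp (b₁ * ζ) * F (exp ζ) * exp (-I * c * exp (b₂ * (φ * I - ζ)))

lemma norm_stripAux (ζ : ℂ) :
    ‖stripAux F b₁ b₂ c φ ζ‖ = ‖exp (b₁ * ζ) * F (exp ζ)‖ *
      Real.exp (c * Real.exp (-(b₂ * ζ.re)) * Real.sin (b₂ * (φ - ζ.im))) := by
  rw [stripAux, norm_mul _ (exp _), norm_exp]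
  congr 2
  simp only [neg_mul, neg_re, mul_re, I_re, ofReal_re, zero_mul, I_im, ofReal_im, mul_zero,
    sub_self, exp_re, sub_re, mul_one, zero_sub, mul_neg, sub_im, mul_im, add_zero, sub_zero,
    neg_zero, one_mul, zero_add, exp_im, neg_neg]
  ring_nf

lemma norm_cexp_mul_comp_cexp_le (h1 : ∀ z : ℂ, 0 < z.re → ‖F z‖ ≤ a₁ * z.re ^ (-b₁))
    {ζ : ℂ} (hζ : 0 < Real.cos ζ.im) :
    ‖exp (b₁ * ζ) * F (exp ζ)‖ ≤ a₁ * Real.cos ζ.im ^ (-b₁) := by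
  have hre : (exp ζ).re = Real.exp ζ.re * Real.cos ζ.im := exp_re ζ
  calc ‖exp (b₁ * ζ) * F (exp ζ)‖
      ≤ Real.exp (b₁ * ζ.re) * (a₁ * (Real.exp ζ.re * Real.cos ζ.im) ^ (-b₁)) := by
        rw [norm_mul, norm_exp, ← hre]
        simp only [re_ofReal_mul]
        gcongr
        exact h1 _ (by rw [hre]; positivity)
    _ = a₁ * Real.cos ζ.im ^ (-b₁) := by
        rw [Real.mul_rpow (Real.exp_pos _).le hζ.le, ← Real.exp_mul,
          show ζ.re * -b₁ = -(b₁ * ζ.re) by ring, Real.exp_neg]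
        field_simp

lemma norm_cexp_mul_comp_cexp_ofReal_le
    (h2 : ∀ t : ℝ, 0 < t → ‖F t‖ ≤ a₁ * t ^ (-b₁) * Real.exp (-a₂ * t ^ (-b₂))) (x : ℝ) :
    ‖exp (b₁ * x) * F (exp x)‖ ≤ a₁ * Real.exp (-a₂ * Real.exp (-(b₂ * x))) := by
  have hrpow (b : ℝ) : Real.exp x ^ (-b) = Real.exp (-(b * x)) := by
    rw [← Real.exp_mul]; ring_nf
  calc ‖exp (b₁ * x) * F (exp x)‖
      ≤ Real.exp (b₁ * x) * (a₁ * Real.exp x ^ (-b₁) * Real.exp (-a₂ * Real.exp x ^ (-b₂))) := by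
        rw [norm_mul, ← ofReal_mul, ← ofReal_exp, ← ofReal_exp, norm_real,
          Real.norm_of_nonneg (Real.exp_pos _).le]
        gcongr
        exact h2 _ (Real.exp_pos x)
    _ = a₁ * Real.exp (-a₂ * Real.exp (-(b₂ * x))) := by
        rw [hrpow, hrpow, Real.exp_neg (b₁ * x)]
        field_simp

lemma differentiableOn_stripAux (hF : DifferentiableOn ℂ F {z : ℂ | 0 < z.re}) :
    DifferentiableOn ℂ (stripAux F b₁ b₂ c φ) (im ⁻¹' Ioo (-(π / 2)) (π / 2)) := by
  have hmaps : MapsTo exp (im ⁻¹' Ioo (-(π / 2)) (π / 2)) {z : ℂ | 0 < z.re} := fun ζ hζ => by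
    simpa [exp_re] using mul_pos (Real.exp_pos ζ.re) (Real.cos_pos_of_mem_Ioo hζ)
  exact ((by fun_prop : Differentiable ℂ fun ζ : ℂ => exp (b₁ * ζ)).differentiableOn.mul
    (hF.comp differentiable_exp.differentiableOn hmaps)).mul (by fun_prop)

lemma norm_stripAux_le_of_mem_strip (h1 : ∀ z : ℂ, 0 < z.re → ‖F z‖ ≤ a₁ * z.re ^ (-b₁))
    (ha₁ : 0 ≤ a₁) (hb₁ : 0 ≤ b₁) (hb₂ : 0 ≤ b₂) (hφ : φ < π / 2) {ζ : ℂ} (h0 : 0 ≤ ζ.im)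
    (hφ' : ζ.im ≤ φ) :
    ‖stripAux F b₁ b₂ c φ ζ‖ ≤
      a₁ * Real.cos φ ^ (-b₁) * Real.exp (|c| * Real.exp (b₂ * |ζ.re|)) := by
  have hcos : Real.cos φ ≤ Real.cos ζ.im :=
    Real.cos_le_cos_of_nonneg_of_le_pi h0 (by linarith [Real.pi_pos]) hφ'
  have hcosφ : 0 < Real.cos φ := Real.cos_pos_of_mem_Ioo ⟨by linarith [Real.pi_pos], hφ⟩
  rw [norm_stripAux]
  gcongr ?_ * Real.exp ?_
  · exact (norm_cexp_mul_comp_cexp_le h1 (hcosφ.trans_le hcos)).trans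
      (mul_le_mul_of_nonneg_left (Real.rpow_le_rpow_of_nonpos hcosφ hcos (neg_nonpos.2 hb₁)) ha₁)
  · calc c * Real.exp (-(b₂ * ζ.re)) * Real.sin (b₂ * (φ - ζ.im))
        ≤ |c * Real.exp (-(b₂ * ζ.re)) * Real.sin (b₂ * (φ - ζ.im))| := le_abs_self _
      _ = |c| * Real.exp (-(b₂ * ζ.re)) * |Real.sin (b₂ * (φ - ζ.im))| := by
          rw [abs_mul, abs_mul, abs_of_pos (Real.exp_pos _)]
      _ ≤ |c| * Real.exp (-(b₂ * ζ.re)) * 1 := by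
          gcongr
          exact Real.abs_sin_le_one _
      _ ≤ |c| * Real.exp (b₂ * |ζ.re|) := by
          rw [mul_one]
          gcongr
          nlinarith [neg_abs_le ζ.re]

lemma norm_stripAux_le_of_im_eq_zero
    (h2 : ∀ t : ℝ, 0 < t → ‖F t‖ ≤ a₁ * t ^ (-b₁) * Real.exp (-a₂ * t ^ (-b₂)))
    (hsin : Real.sin (b₂ * φ) ≠ 0) {ζ : ℂ} (hζ : ζ.im = 0) :
    ‖stripAux F b₁ b₂ (a₂ / Real.sin (b₂ * φ)) φ ζ‖ ≤ a₁ := by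
  obtain ⟨x, rfl⟩ : ∃ x : ℝ, ζ = x := ⟨ζ.re, ext rfl (by simpa using hζ)⟩
  rw [norm_stripAux, hζ, sub_zero, ofReal_re, div_mul_eq_mul_div, div_mul_cancel₀ _ hsin]
  calc ‖exp (b₁ * x) * F (exp x)‖ * Real.exp (a₂ * Real.exp (-(b₂ * x)))
      ≤ a₁ * Real.exp (-a₂ * Real.exp (-(b₂ * x))) * Real.exp (a₂ * Real.exp (-(b₂ * x))) := by
        gcongr
        exact norm_cexp_mul_comp_cexp_ofReal_le h2 x
    _ = a₁ := by rw [mul_assoc, ← Real.exp_add]; simp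

lemma norm_stripAux_le_of_im_eq (h1 : ∀ z : ℂ, 0 < z.re → ‖F z‖ ≤ a₁ * z.re ^ (-b₁))
    (hφ : 0 < Real.cos φ) {ζ : ℂ} (hζ : ζ.im = φ) :
    ‖stripAux F b₁ b₂ c φ ζ‖ ≤ a₁ * Real.cos φ ^ (-b₁) := by
  rw [norm_stripAux, hζ, sub_self, mul_zero, Real.sin_zero, mul_zero, Real.exp_zero, mul_one]
  exact hζ ▸ norm_cexp_mul_comp_cexp_le h1 (hζ ▸ hφ)

lemma norm_stripAux_le (hF : DifferentiableOn ℂ F {z : ℂ | 0 < z.re})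
    (h1 : ∀ z : ℂ, 0 < z.re → ‖F z‖ ≤ a₁ * z.re ^ (-b₁))
    (h2 : ∀ t : ℝ, 0 < t → ‖F t‖ ≤ a₁ * t ^ (-b₁) * Real.exp (-a₂ * t ^ (-b₂)))
    (ha₁ : 0 ≤ a₁) (hb₁ : 0 ≤ b₁) (hb₂ : 0 < b₂) (hφ : φ ∈ Ioo 0 (π / 2)) (hb₂φ : b₂ * φ < π)
    {ζ : ℂ} (h0 : 0 ≤ ζ.im) (hφ' : ζ.im ≤ φ) :
    ‖stripAux F b₁ b₂ (a₂ / Real.sin (b₂ * φ)) φ ζ‖ ≤ a₁ * Real.cos φ ^ (-b₁) := by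
  obtain ⟨hφ₀, hφ⟩ := hφ
  have hcos : 0 < Real.cos φ := Real.cos_pos_of_mem_Ioo ⟨by linarith, hφ⟩
  have hsin : 0 < Real.sin (b₂ * φ) := Real.sin_pos_of_pos_of_lt_pi (by positivity) hb₂φ
  have hclosure : closure (im ⁻¹' Ioo 0 φ) ⊆ im ⁻¹' Ioo (-(π / 2)) (π / 2) := by
    rw [closure_preimage_im, closure_Ioo hφ₀.ne]
    exact preimage_mono (Icc_subset_Ioo (by linarith) hφ)
  have hgrowth : stripAux F b₁ b₂ (a₂ / Real.sin (b₂ * φ)) φ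
      =O[comap (_root_.abs ∘ re) atTop ⊓ 𝓟 (im ⁻¹' Ioo 0 φ)]
      fun ζ => Real.exp (|a₂ / Real.sin (b₂ * φ)| * Real.exp (b₂ * |ζ.re|)) := by
    refine IsBigO.of_bound (a₁ * Real.cos φ ^ (-b₁)) (eventually_inf_principal.2 <|
      Eventually.of_forall fun ζ hζ => ?_)
    rw [Real.norm_of_nonneg (Real.exp_pos _).le]
    exact norm_stripAux_le_of_mem_strip h1 ha₁ hb₁ hb₂.le hφ hζ.1.le hζ.2.le
  refine PhragmenLindelof.horizontal_strip
    ((differentiableOn_stripAux hF).mono hclosure).diffContOnCl ⟨b₂, ?_, _, hgrowth⟩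
    (fun ζ hζ => (norm_stripAux_le_of_im_eq_zero h2 hsin.ne' hζ).trans ?_)
    (fun ζ hζ => norm_stripAux_le_of_im_eq h1 hcos hζ) h0 hφ'
  · rwa [sub_zero, lt_div_iff₀ hφ₀]
  · exact le_mul_of_one_le_right ha₁
      (Real.one_le_rpow_of_pos_of_le_one_of_nonpos hcos (Real.cos_le_one φ) (neg_nonpos.2 hb₁))

lemma rpow_norm_mul_norm_mul_exp_le (hF : DifferentiableOn ℂ F {z : ℂ | 0 < z.re})
    (h1 : ∀ z : ℂ, 0 < z.re → ‖F z‖ ≤ a₁ * z.re ^ (-b₁))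
    (h2 : ∀ t : ℝ, 0 < t → ‖F t‖ ≤ a₁ * t ^ (-b₁) * Real.exp (-a₂ * t ^ (-b₂)))
    (ha₁ : 0 ≤ a₁) (hb₁ : 0 ≤ b₁) (hb₂ : 0 < b₂) (hφ : φ ∈ Ioo 0 (π / 2)) (hb₂φ : b₂ * φ < π)
    {z : ℂ} (hz : z ≠ 0) (harg : arg z ∈ Icc 0 φ) :
    ‖z‖ ^ b₁ * ‖F z‖ * Real.exp (a₂ / Real.sin (b₂ * φ) * ‖z‖ ^ (-b₂) *
      Real.sin (b₂ * (φ - arg z))) ≤ a₁ * Real.cos φ ^ (-b₁) := by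
  have := norm_stripAux_le hF h1 h2 ha₁ hb₁ hb₂ hφ hb₂φ (ζ := log z)
    (by rw [log_im]; exact harg.1) (by rw [log_im]; exact harg.2)
  rw [norm_stripAux, norm_mul, norm_exp, exp_log hz, re_ofReal_mul, log_re, log_im] at this
  rwa [Real.rpow_def_of_pos (norm_pos_iff.2 hz), Real.rpow_def_of_pos (norm_pos_iff.2 hz),
    mul_comm (Real.log _), mul_comm (Real.log _), neg_mul]

theorem norm_le_of_im_nonneg (hF : DifferentiableOn ℂ F {z : ℂ | 0 < z.re})
    (h1 : ∀ z : ℂ, 0 < z.re → ‖F z‖ ≤ a₁ * z.re ^ (-b₁))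
    (h2 : ∀ t : ℝ, 0 < t → ‖F t‖ ≤ a₁ * t ^ (-b₁) * Real.exp (-a₂ * t ^ (-b₂)))
    (ha₁ : 0 ≤ a₁) (ha₂ : 0 ≤ a₂) (hb₁ : 0 ≤ b₁) (hb₂ : b₂ ∈ Ioc 0 1)
    {z : ℂ} (hz : 0 < z.re) (him : 0 ≤ z.im) :
    ‖F z‖ ≤ a₁ * 2 ^ b₁ * z.re ^ (-b₁) * Real.exp (-(a₂ * b₂ / 2) * ‖z‖ ^ (-b₂ - 1) * z.re) := by
  obtain ⟨hb₂₀, hb₂₁⟩ := hb₂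
  have hz₀ : z ≠ 0 := fun h => by simp [h] at hz
  have hr : 0 < ‖z‖ := norm_pos_iff.2 hz₀
  set θ := arg z
  have hre : z.re = ‖z‖ * Real.cos θ := (norm_mul_cos_arg z).symm
  have hθ₀ : 0 ≤ θ := arg_nonneg_iff.2 him
  have hθ : θ ≤ π / 2 := (abs_le.1 (abs_arg_le_pi_div_two_iff.2 hz.le)).2
  have hcosθ : 0 < Real.cos θ := pos_of_mul_pos_right (hre ▸ hz) hr.le
  set φ := Real.arccos (Real.cos θ / 2)
  have hcosφ : Real.cos φ = Real.cos θ / 2 :=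
    Real.cos_arccos (by linarith) (by linarith [Real.cos_le_one θ])
  obtain ⟨hφ₀, hφ⟩ := arccos_cos_div_two_mem_Ioo hcosθ
  have hθφ : θ ≤ φ := le_arccos_cos_div_two hθ₀ hθ
  have hsin : 0 < Real.sin (b₂ * φ) :=
    Real.sin_pos_of_pos_of_lt_pi (by positivity) (by nlinarith [Real.pi_pos])
  set c := a₂ / Real.sin (b₂ * φ)
  set S := Real.sin (b₂ * (φ - θ))
  have hsector := rpow_norm_mul_norm_mul_exp_le hF h1 h2 ha₁ hb₁ hb₂₀ ⟨hφ₀, hφ⟩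
    (by nlinarith [Real.pi_pos]) hz₀ ⟨hθ₀, hθφ⟩
  have hdecay : a₂ * b₂ / 2 * Real.cos θ ≤ c * S := by
    rw [div_mul_eq_mul_div a₂, le_div_iff₀ hsin]
    nlinarith [mul_cos_mul_sin_le_sin_mul_sub hb₂₀ hb₂₁ hθ₀ hθφ hφ.le hcosφ]
  have hexp : -(a₂ * b₂ / 2) * ‖z‖ ^ (-b₂ - 1) * z.re =
      -(a₂ * b₂ / 2 * Real.cos θ * ‖z‖ ^ (-b₂)) := by
    rw [hre, Real.rpow_sub_one hr.ne']
    field_simp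
  have hfactor : a₁ * 2 ^ b₁ * z.re ^ (-b₁) = ‖z‖ ^ (-b₁) * (a₁ * (Real.cos θ / 2) ^ (-b₁)) := by
    rw [hre, Real.mul_rpow hr.le hcosθ.le, Real.div_rpow hcosθ.le zero_le_two,
      Real.rpow_neg zero_le_two]
    field_simp
  calc ‖F z‖ = ‖z‖ ^ (-b₁) * Real.exp (-(c * ‖z‖ ^ (-b₂) * S)) *
        (‖z‖ ^ b₁ * ‖F z‖ * Real.exp (c * ‖z‖ ^ (-b₂) * S)) := by
        rw [Real.rpow_neg hr.le, Real.exp_neg]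
        field_simp
    _ ≤ ‖z‖ ^ (-b₁) * Real.exp (-(a₂ * b₂ / 2 * Real.cos θ * ‖z‖ ^ (-b₂))) *
        (a₁ * (Real.cos θ / 2) ^ (-b₁)) := by
        rw [← hcosφ]
        gcongr ?_ * Real.exp (-?_) * ?_
        rw [mul_right_comm c]
        exact mul_le_mul_of_nonneg_right hdecay (by positivity)
    _ = _ := by rw [hexp, hfactor]; ring

/-- A Phragmén–Lindelöf type theorem: if `F` is holomorphic in the open right
half-plane, satisfies `|F z| ≤ a₁ (Re z)^{-b₁}` there, and decays like
`|F t| ≤ a₁ t^{-b₁} exp (-a₂ t^{-b₂})` on the positive real axis, then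
`|F z| ≤ a₁ 2^{b₁} (Re z)^{-b₁} exp (-(a₂ b₂ / 2) |z|^{-b₂-1} Re z)` in the half-plane. -/
theorem phragmen_lindelof_right_half_plane
    (F : ℂ → ℂ) (hF : DifferentiableOn ℂ F {z : ℂ | 0 < z.re})
    (a₁ a₂ b₁ b₂ : ℝ) (ha₁ : 0 < a₁) (ha₂ : 0 < a₂) (hb₁ : 0 ≤ b₁)
    (hb₂ : b₂ ∈ Set.Ioc (0 : ℝ) 1)
    (h1 : ∀ z : ℂ, 0 < z.re → ‖F z‖ ≤ a₁ * z.re ^ (-b₁))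
    (h2 : ∀ t : ℝ, 0 < t →
      ‖F t‖ ≤ a₁ * t ^ (-b₁) * Real.exp (-a₂ * t ^ (-b₂))) :
    ∀ z : ℂ, 0 < z.re →
      ‖F z‖ ≤
        a₁ * 2 ^ b₁ * z.re ^ (-b₁) *
          Real.exp (-(a₂ * b₂ / 2) * ‖z‖ ^ (-b₂ - 1) * z.re) := by
  intro z hz
  wlog him : 0 ≤ z.im generalizing F z
  · have hG : DifferentiableOn ℂ (conj ∘ F ∘ conj) {z : ℂ | 0 < z.re} := by
      simpa using hF.conj_conj_of_isOpen (isOpen_lt continuous_const continuous_re)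
    simpa using this (conj ∘ F ∘ conj) hG (fun w hw => by simpa using h1 (conj w) (by simpa))
      (fun t ht => by simpa using h2 t ht) (conj z) (by simpa) (by rw [conj_im]; linarith)
  exact norm_le_of_im_nonneg hF h1 h2 ha₁.le ha₂.le hb₁ hb₂ hz him
end

section
/- Let (X,d,μ) be a doubling metric measure space with dimension n, let m ≥ 2, and suppose the kernels (p_t)_{t>0} satisfy the m-order Gaussian upper bound (GE_m). Then there exists a constant C > 0 such that for every t > 0, every x ∈ X and every bounded measurable g : X → ℂ: ∫_X |p_t(x,y)| |g(y)|² dμ(y) ≤ C · sup_{x' ∈ X} ⨍_{B(x', t^{1/m})} |g(y)|² dμ(y). -/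
open Metric MeasureTheory ENNReal

open scoped NNReal

/-!
Write `r = t^{1/m}` and insert into the integrand the average over `z ∈ B(y, r)` of the constant
`1`; then exchange the order of integration. For `d(y, z) < r` the Gaussian factor of `p_t(x, y)`
is at most `e^{2c} e^{-c d(x,z)/r}`, and doubling gives `μ(B(y,r))⁻¹ ≲ μ(B(z,r))⁻¹`, so the
inner integral over `y` becomes the average of `|g|²` over `B(z, r)`, bounded by the supremum.
What remains is `∫ e^{-c d(x,z)/r} dμ(z) ≲ μ(B(x, r))`, which follows by summing the doubling
bound over the balls `B(x, (k+1) r)`. Exchanging the integrals needs `{d(y, z) < r}` to be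
measurable for the product σ-algebra, i.e. `X` separable; this follows from balls having positive
finite measure.
-/

theorem sub_one_le_rpow_rpow_one_div_sub_one {s m : ℝ} (hs : 0 ≤ s) (hm : 1 < m) :
    s - 1 ≤ (s ^ m) ^ (1 / (m - 1)) := by
  rcases le_or_gt s 1 with hs1 | hs1
  · exact (sub_nonpos.2 hs1).trans (by positivity)
  have hexp : 1 ≤ m * (1 / (m - 1)) := by
    rw [mul_one_div, le_div_iff₀ (by linarith)]
    linarith
  rw [← Real.rpow_mul hs]
  linarith [Real.self_le_rpow_of_one_le hs1.le hexp]

theorem exp_neg_gaussian_le {c d m r : ℝ} (hc : 0 ≤ c) (hd : 0 ≤ d) (hm : 1 < m) (hr : 0 < r) :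
    Real.exp (-c * (d ^ m / r ^ m) ^ (1 / (m - 1))) ≤ Real.exp c * Real.exp (-c * d / r) := by
  rw [← Real.exp_add, Real.exp_le_exp, ← Real.div_rpow hd hr.le]
  have := mul_le_mul_of_nonneg_left
    (sub_one_le_rpow_rpow_one_div_sub_one (div_nonneg hd hr.le) hm) hc
  rw [mul_div_assoc]
  linarith

theorem summable_rpow_mul_exp_neg_nat_mul (a : ℝ) {c : ℝ} (hc : 0 < c) :
    Summable fun k : ℕ => ((k : ℝ) + 1) ^ a * Real.exp (-c * k) := by
  set N := ⌈a⌉₊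
  have hshift : Summable fun k : ℕ =>
      Real.exp c * (((k + 1 : ℕ) : ℝ) ^ N * Real.exp (-c * (k + 1 : ℕ))) :=
    ((summable_nat_add_iff 1).2 (Real.summable_pow_mul_exp_neg_nat_mul N hc)).mul_left _
  refine hshift.of_nonneg_of_le (fun k => by positivity) fun k => ?_
  calc ((k : ℝ) + 1) ^ a * Real.exp (-c * k)
      ≤ ((k : ℝ) + 1) ^ (N : ℝ) * Real.exp (-c * k) := by
        gcongr
        · linarith [k.cast_nonneg (α := ℝ)]
        · exact Nat.le_ceil a
    _ = Real.exp c * (((k + 1 : ℕ) : ℝ) ^ N * Real.exp (-c * (k + 1 : ℕ))) := by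
        rw [Real.rpow_natCast, mul_left_comm, ← Real.exp_add]
        push_cast
        ring_nf

theorem ofReal_abs_le_of_gaussian_of_dist_lt {Y : Type*} [PseudoMetricSpace Y] {x y z : Y}
    {M : ℝ≥0∞} {a CG cG m r : ℝ} (hCG : 0 ≤ CG) (hcG : 0 ≤ cG) (hm : 1 < m) (hr : 0 < r)
    (hM0 : M ≠ 0) (hMtop : M ≠ ∞)
    (ha : |a| ≤ CG / M.toReal * Real.exp (-cG * (dist x y ^ m / r ^ m) ^ (1 / (m - 1))))
    (hyz : dist y z < r) :
    ENNReal.ofReal |a| ≤ ENNReal.ofReal (CG * Real.exp (2 * cG)) * M⁻¹ *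
      ENNReal.ofReal (Real.exp (-cG * dist x z / r)) := by
  have hshift : -cG * dist x y / r ≤ cG + -cG * dist x z / r := by
    rw [add_div' _ _ _ hr.ne', div_le_div_iff_of_pos_right hr]
    nlinarith [dist_triangle x y z]
  have hexp : Real.exp (-cG * (dist x y ^ m / r ^ m) ^ (1 / (m - 1))) ≤
      Real.exp (2 * cG) * Real.exp (-cG * dist x z / r) := calc
    _ ≤ Real.exp cG * Real.exp (-cG * dist x y / r) := exp_neg_gaussian_le hcG dist_nonneg hm hr
    _ ≤ Real.exp cG * (Real.exp cG * Real.exp (-cG * dist x z / r)) := by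
      gcongr
      rwa [← Real.exp_add, Real.exp_le_exp]
    _ = Real.exp (2 * cG) * Real.exp (-cG * dist x z / r) := by
      rw [← mul_assoc, ← Real.exp_add, two_mul]
  calc ENNReal.ofReal |a|
      ≤ ENNReal.ofReal (CG / M.toReal * (Real.exp (2 * cG) * Real.exp (-cG * dist x z / r))) :=
        ENNReal.ofReal_le_ofReal (ha.trans (by gcongr))
    _ = _ := by
      rw [ENNReal.ofReal_mul (by positivity), ENNReal.ofReal_mul (by positivity),
        ENNReal.ofReal_mul hCG, ENNReal.ofReal_div_of_pos (ENNReal.toReal_pos hM0 hMtop),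
        ENNReal.ofReal_toReal hMtop, div_eq_mul_inv]
      ring

section

variable {X : Type*} [MetricSpace X] [MeasurableSpace X] {μ : Measure X}

def HasDoublingDimension (μ : Measure X) (Cd n : ℝ) : Prop :=
  ∀ (x : X) (r lam : ℝ), 0 < r → 1 ≤ lam →
    μ (ball x (lam * r)) ≤ ENNReal.ofReal (Cd * lam ^ n) * μ (ball x r)

theorem HasDoublingDimension.inv_measure_ball_le {Cd n r : ℝ} (hμ : HasDoublingDimension μ Cd n)
    (hr : 0 < r) (h0 : ∀ x, μ (ball x r) ≠ 0) (htop : ∀ x, μ (ball x r) ≠ ∞) {y z : X}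
    (hyz : dist y z < r) :
    (μ (ball y r))⁻¹ ≤ ENNReal.ofReal (Cd * 2 ^ n) * (μ (ball z r))⁻¹ := by
  have hsub : ball z r ⊆ ball y (2 * r) := ball_subset_ball' (by rw [dist_comm]; linarith)
  have hle := (measure_mono hsub).trans (hμ y r 2 hr one_le_two)
  calc (μ (ball y r))⁻¹ = (μ (ball z r))⁻¹ * μ (ball z r) * (μ (ball y r))⁻¹ := by
        rw [ENNReal.inv_mul_cancel (h0 z) (htop z), one_mul]
    _ ≤ (μ (ball z r))⁻¹ * (ENNReal.ofReal (Cd * 2 ^ n) * μ (ball y r)) * (μ (ball y r))⁻¹ := by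
        gcongr
    _ = ENNReal.ofReal (Cd * 2 ^ n) * (μ (ball z r))⁻¹ * (μ (ball y r) * (μ (ball y r))⁻¹) := by
        ring
    _ = ENNReal.ofReal (Cd * 2 ^ n) * (μ (ball z r))⁻¹ := by
        rw [ENNReal.mul_inv_cancel (h0 y) (htop y), mul_one]

theorem sigmaFinite_of_measure_ball_lt_top (x₀ : X) (h : ∀ r, 0 < r → μ (ball x₀ r) < ∞) :
    SigmaFinite μ :=
  ⟨⟨⟨fun k : ℕ => ball x₀ (k + 1), fun _ => trivial, fun k => h _ (by positivity),
    iUnion_ball_nat_succ x₀⟩⟩⟩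

variable [OpensMeasurableSpace X]

theorem Metric.IsSeparated.countable_of_measure_ball_pos [SFinite μ] {ε : ℝ≥0} {s : Set X}
    (hs : IsSeparated (ε : ℝ≥0∞) s) (hpos : ∀ x, 0 < μ (ball x (ε / 2))) : s.Countable := by
  have hdisj : Pairwise (Function.onFun Disjoint fun x : s => ball (x : X) (ε / 2)) := by
    intro x y hxy
    refine ball_disjoint_ball ?_
    have hε : (ε : ℝ≥0∞) < edist (x : X) y := hs x.2 y.2 (Subtype.coe_injective.ne hxy)
    rw [edist_nndist, ENNReal.coe_lt_coe] at hε
    rw [add_halves, ← coe_nndist]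
    exact_mod_cast hε.le
  have := Measure.countable_meas_pos_of_disjoint_iUnion (μ := μ) (fun _ => measurableSet_ball) hdisj
  simp only [hpos] at this
  exact Set.countable_coe_iff.mp (Set.countable_univ_iff.mp this)

theorem secondCountableTopology_of_measure_ball_pos [SFinite μ]
    (hpos : ∀ x r, 0 < r → 0 < μ (ball x r)) : SecondCountableTopology X := by
  refine secondCountable_of_almost_dense_set fun ε hε => ?_
  obtain ⟨N, hN⟩ := zorn_subset {N : Set X | N ⊆ Set.univ ∧ IsSeparated (ε.toNNReal : ℝ≥0∞) N}
    fun c hcS hc => ⟨⋃₀ c, ⟨Set.subset_univ _, hc.pairwise_sUnion.2 fun s hs => (hcS hs).2⟩,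
      fun _ => Set.subset_sUnion_of_mem⟩
  refine ⟨N, hN.prop.2.countable_of_measure_ball_pos fun x => hpos x _ (by positivity),
    fun x => ?_⟩
  obtain ⟨y, hy, hxy⟩ := IsCover.of_maximal_isSeparated hN (Set.mem_univ x)
  refine ⟨y, hy, ?_⟩
  simp only [Set.mem_ofPred_eq, edist_nndist] at hxy
  have := (NNReal.coe_le_coe.2 (ENNReal.coe_le_coe.1 hxy))
  simpa [hε.le] using this

theorem measurable_measure_ball [SecondCountableTopology X] [SFinite μ] (r : ℝ) :
    Measurable fun x => μ (ball x r) :=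
  measurable_measure_prodMk_left
    (isOpen_lt (continuous_snd.dist continuous_fst) continuous_const).measurableSet

theorem lintegral_mul_le_iSup_average_mul_lintegral [SecondCountableTopology X] [SFinite μ]
    {r : ℝ} (h0 : ∀ x, μ (ball x r) ≠ 0) (htop : ∀ x, μ (ball x r) ≠ ∞)
    {w W G : X → ℝ≥0∞} (hW : Measurable W) (hG : Measurable G)
    (hwW : ∀ y z, dist y z < r → w y * (μ (ball y r))⁻¹ ≤ W z * (μ (ball z r))⁻¹) :
    ∫⁻ y, w y * G y ∂μ ≤
      (⨆ z, (μ (ball z r))⁻¹ * ∫⁻ y in ball z r, G y ∂μ) * ∫⁻ z, W z ∂μ := by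
  set S := ⨆ z, (μ (ball z r))⁻¹ * ∫⁻ y in ball z r, G y ∂μ
  set U : X → X → ℝ≥0∞ := fun y z => (ball z r).indicator G y * (W z * (μ (ball z r))⁻¹)
  have hU : Measurable (Function.uncurry U) :=
    ((hG.comp measurable_fst).indicator
      (isOpen_lt (continuous_fst.dist continuous_snd) continuous_const).measurableSet).mul
      ((hW.comp measurable_snd).mul ((measurable_measure_ball r).comp measurable_snd).inv)
  -- insert the average over `z ∈ B(y, r)` of the constant `1`
  have hwG : ∀ y, w y * G y ≤ ∫⁻ z, U y z ∂μ := fun y => calc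
    w y * G y = ∫⁻ z, (ball y r).indicator (fun _ => w y * G y * (μ (ball y r))⁻¹) z ∂μ := by
      rw [lintegral_indicator_const measurableSet_ball, mul_assoc,
        ENNReal.inv_mul_cancel (h0 y) (htop y), mul_one]
    _ ≤ ∫⁻ z, U y z ∂μ := lintegral_mono fun z => by
      by_cases hz : z ∈ ball y r
      · have hyz : y ∈ ball z r := mem_ball_comm.1 hz
        simp only [U, Set.indicator_of_mem hz, Set.indicator_of_mem hyz]
        calc w y * G y * (μ (ball y r))⁻¹ = w y * (μ (ball y r))⁻¹ * G y := by ring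
          _ ≤ W z * (μ (ball z r))⁻¹ * G y := mul_le_mul_left (hwW y z hyz) _
          _ = G y * (W z * (μ (ball z r))⁻¹) := by ring
      · simp only [Set.indicator_of_notMem hz, zero_le]
  calc ∫⁻ y, w y * G y ∂μ ≤ ∫⁻ y, ∫⁻ z, U y z ∂μ ∂μ := lintegral_mono hwG
    _ = ∫⁻ z, ∫⁻ y, U y z ∂μ ∂μ := lintegral_lintegral_swap hU.aemeasurable
    _ = ∫⁻ z, W z * ((μ (ball z r))⁻¹ * ∫⁻ y in ball z r, G y ∂μ) ∂μ := by
      refine lintegral_congr fun z => ?_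
      rw [lintegral_mul_const _ (hG.indicator measurableSet_ball),
        lintegral_indicator measurableSet_ball]
      ring
    _ ≤ ∫⁻ z, W z * S ∂μ := by
      gcongr with z
      exact le_iSup (fun z => (μ (ball z r))⁻¹ * ∫⁻ y in ball z r, G y ∂μ) z
    _ = S * ∫⁻ z, W z ∂μ := by rw [lintegral_mul_const _ hW, mul_comm]

theorem HasDoublingDimension.lintegral_exp_neg_dist_le {Cd n r c : ℝ}
    (hμ : HasDoublingDimension μ Cd n) (hr : 0 < r) (hc : 0 ≤ c) (x : X) :
    ∫⁻ z, ENNReal.ofReal (Real.exp (-c * dist x z / r)) ∂μ ≤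
      (∑' k : ℕ, ENNReal.ofReal (Cd * (((k : ℝ) + 1) ^ n * Real.exp (-c * k)))) * μ (ball x r) := by
  -- the term `k = ⌊dist x z / r⌋` alone dominates
  have hpt : ∀ z, ENNReal.ofReal (Real.exp (-c * dist x z / r)) ≤
      ∑' k : ℕ, (ball x ((k + 1) * r)).indicator
        (fun _ => ENNReal.ofReal (Real.exp (-c * k))) z := by
    intro z
    set k := ⌊dist x z / r⌋₊
    have hz : z ∈ ball x ((k + 1) * r) := by
      rw [mem_ball', ← div_lt_iff₀ hr]
      exact Nat.lt_floor_add_one _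
    refine le_trans ?_ (ENNReal.le_tsum k)
    rw [Set.indicator_of_mem hz]
    gcongr
    rw [mul_div_assoc]
    exact mul_le_mul_of_nonpos_left (Nat.floor_le (by positivity)) (neg_nonpos.2 hc)
  calc ∫⁻ z, ENNReal.ofReal (Real.exp (-c * dist x z / r)) ∂μ
      ≤ ∫⁻ z, ∑' k : ℕ, (ball x ((k + 1) * r)).indicator
          (fun _ => ENNReal.ofReal (Real.exp (-c * k))) z ∂μ := lintegral_mono hpt
    _ = ∑' k : ℕ, ENNReal.ofReal (Real.exp (-c * k)) * μ (ball x ((k + 1) * r)) := by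
      rw [lintegral_tsum fun k => (measurable_const.indicator measurableSet_ball).aemeasurable]
      simp only [lintegral_indicator_const measurableSet_ball]
    _ ≤ ∑' k : ℕ, ENNReal.ofReal (Cd * (((k : ℝ) + 1) ^ n * Real.exp (-c * k))) *
          μ (ball x r) := by
      refine ENNReal.tsum_le_tsum fun k => ?_
      have hk : (1 : ℝ) ≤ k + 1 := by linarith [k.cast_nonneg (α := ℝ)]
      refine (mul_le_mul_right (hμ x r _ hr hk) _).trans_eq ?_
      rw [← mul_assoc, ← ENNReal.ofReal_mul (by positivity), mul_comm (Real.exp _), mul_assoc]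
    _ = _ := ENNReal.tsum_mul_right


theorem HasDoublingDimension.lintegral_mul_le_of_gaussian [SecondCountableTopology X] [SFinite μ]
    {Cd n m r CG cG : ℝ} (hμ : HasDoublingDimension μ Cd n) (hm : 1 < m) (hr : 0 < r)
    (hCG : 0 ≤ CG) (hcG : 0 ≤ cG) (h0 : ∀ x, μ (ball x r) ≠ 0) (htop : ∀ x, μ (ball x r) ≠ ∞)
    {x : X} {q : X → ℝ} (hq : ∀ y, |q y| ≤ CG / (μ (ball x r)).toReal *
      Real.exp (-cG * (dist x y ^ m / r ^ m) ^ (1 / (m - 1))))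
    {G : X → ℝ≥0∞} (hG : Measurable G) :
    ∫⁻ y, ENNReal.ofReal |q y| * G y ∂μ ≤
      ENNReal.ofReal (CG * Real.exp (2 * cG) * (Cd * 2 ^ n)) *
        (∑' k : ℕ, ENNReal.ofReal (Cd * (((k : ℝ) + 1) ^ n * Real.exp (-cG * k)))) *
        ⨆ z, (μ (ball z r))⁻¹ * ∫⁻ y in ball z r, G y ∂μ := by
  set c₁ := ENNReal.ofReal (CG * Real.exp (2 * cG)) * ENNReal.ofReal (Cd * 2 ^ n) *
    (μ (ball x r))⁻¹
  calc ∫⁻ y, ENNReal.ofReal |q y| * G y ∂μ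
      ≤ (⨆ z, (μ (ball z r))⁻¹ * ∫⁻ y in ball z r, G y ∂μ) *
          ∫⁻ z, c₁ * ENNReal.ofReal (Real.exp (-cG * dist x z / r)) ∂μ := by
        refine lintegral_mul_le_iSup_average_mul_lintegral h0 htop (by fun_prop) hG
          fun y z hyz => ?_
        calc ENNReal.ofReal |q y| * (μ (ball y r))⁻¹
            ≤ ENNReal.ofReal (CG * Real.exp (2 * cG)) * (μ (ball x r))⁻¹ *
                ENNReal.ofReal (Real.exp (-cG * dist x z / r)) *
              (ENNReal.ofReal (Cd * 2 ^ n) * (μ (ball z r))⁻¹) :=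
              mul_le_mul' (ofReal_abs_le_of_gaussian_of_dist_lt hCG hcG hm hr (h0 x) (htop x)
                (hq y) hyz) (hμ.inv_measure_ball_le hr h0 htop hyz)
          _ = _ := by ring
    _ ≤ (⨆ z, (μ (ball z r))⁻¹ * ∫⁻ y in ball z r, G y ∂μ) *
          (c₁ * ((∑' k : ℕ, ENNReal.ofReal (Cd * (((k : ℝ) + 1) ^ n * Real.exp (-cG * k)))) *
            μ (ball x r))) := by
        rw [lintegral_const_mul _ (by fun_prop)]
        gcongr
        exact hμ.lintegral_exp_neg_dist_le hr hcG x
    _ = _ := by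
        rw [ENNReal.ofReal_mul (by positivity)]
        calc _ = ENNReal.ofReal (CG * Real.exp (2 * cG)) * ENNReal.ofReal (Cd * 2 ^ n) *
              (∑' k : ℕ, ENNReal.ofReal (Cd * (((k : ℝ) + 1) ^ n * Real.exp (-cG * k)))) *
              (⨆ z, (μ (ball z r))⁻¹ * ∫⁻ y in ball z r, G y ∂μ) *
              ((μ (ball x r))⁻¹ * μ (ball x r)) := by ring
          _ = _ := by rw [ENNReal.inv_mul_cancel (h0 x) (htop x), mul_one]

end

theorem gaussian_bound_average_domination_general
    {X : Type*} [MetricSpace X] [MeasurableSpace X] [BorelSpace X]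
    (μ : Measure X)
    (hball : ∀ (x : X) (r : ℝ), 0 < r → 0 < μ (ball x r) ∧ μ (ball x r) < ⊤)
    (Cd n : ℝ) (hCd : 0 < Cd)
    (hdoub : ∀ (x : X) (r lam : ℝ), 0 < r → 1 ≤ lam →
      μ (ball x (lam * r)) ≤ ENNReal.ofReal (Cd * lam ^ n) * μ (ball x r))
    (m : ℝ) (hm : 2 ≤ m)
    (p : ℝ → X → X → ℝ)
    (CG cG : ℝ) (hCG : 0 < CG) (hcG : 0 < cG)
    (hGE : ∀ t : ℝ, 0 < t → ∀ x y : X,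
      |p t x y| ≤ CG / (μ (ball x (t ^ (1 / m)))).toReal *
        Real.exp (-cG * (dist x y ^ m / t) ^ (1 / (m - 1)))) :
    ∃ C > (0 : ℝ),
      ∀ t : ℝ, 0 < t → ∀ x : X,
        ∀ g : X → ℂ, Measurable g → (∃ Cb : ℝ, ∀ y : X, ‖g y‖ ≤ Cb) →
          (∫⁻ y, ENNReal.ofReal |p t x y| * (‖g y‖₊ : ℝ≥0∞) ^ 2 ∂μ) ≤
            ENNReal.ofReal C *
              ⨆ x' : X, (μ (ball x' (t ^ (1 / m))))⁻¹ *
                ∫⁻ y in ball x' (t ^ (1 / m)), (‖g y‖₊ : ℝ≥0∞) ^ 2 ∂μ := by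
  have hsum := (summable_rpow_mul_exp_neg_nat_mul n hcG).mul_left Cd
  set K := ∑' k : ℕ, Cd * (((k : ℝ) + 1) ^ n * Real.exp (-cG * k))
  have hK : 0 < K := hsum.tsum_pos (fun k => by positivity) 0 (by positivity)
  refine ⟨CG * Real.exp (2 * cG) * (Cd * 2 ^ n) * K, by positivity, ?_⟩
  intro t ht x g hg _
  set r := t ^ (1 / m)
  have hr : 0 < r := Real.rpow_pos_of_pos ht _
  have hrt : r ^ m = t := by
    rw [← Real.rpow_mul ht.le, one_div_mul_cancel (by linarith), Real.rpow_one]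
  have := sigmaFinite_of_measure_ball_lt_top x fun R hR => (hball x R hR).2
  have := secondCountableTopology_of_measure_ball_pos (μ := μ) fun z R hR => (hball z R hR).1
  refine (HasDoublingDimension.lintegral_mul_le_of_gaussian hdoub (one_lt_two.trans_le hm) hr
    hCG.le hcG.le (fun z => (hball z r hr).1.ne') (fun z => (hball z r hr).2.ne)
    (fun y => by rw [hrt]; exact hGE t ht x y) (by fun_prop)).trans_eq ?_
  rw [← ENNReal.ofReal_tsum_of_nonneg (fun k => by positivity) hsum,
    ← ENNReal.ofReal_mul (by positivity)]

/-- On a doubling metric measure space of dimension `n`, if the kernels `p_t`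
satisfy the `m`-order Gaussian upper bound `(GE_m)`, then there is `C > 0` such that for every
`t > 0`, `x ∈ X` and bounded measurable `g : X → ℂ`,
`∫ |p_t(x,y)| |g(y)|² dμ(y) ≤ C sup_{x'} ⨍_{B(x',t^{1/m})} |g|² dμ`. -/
theorem gaussian_bound_average_domination
    {X : Type*} [MetricSpace X] [MeasurableSpace X] [BorelSpace X]
    (μ : Measure X)
    (hball : ∀ (x : X) (r : ℝ), 0 < r → 0 < μ (ball x r) ∧ μ (ball x r) < ⊤)
    (Cd n : ℝ) (hCd : 0 < Cd) (hn : 0 < n)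
    (hdoub : ∀ (x : X) (r lam : ℝ), 0 < r → 1 ≤ lam →
      μ (ball x (lam * r)) ≤ ENNReal.ofReal (Cd * lam ^ n) * μ (ball x r))
    (m : ℝ) (hm : 2 ≤ m)
    (p : ℝ → X → X → ℝ)
    (hmeas : ∀ t : ℝ, 0 < t → Measurable (Function.uncurry (p t)))
    (CG cG : ℝ) (hCG : 0 < CG) (hcG : 0 < cG)
    (hGE : ∀ t : ℝ, 0 < t → ∀ x y : X,
      |p t x y| ≤ CG / (μ (ball x (t ^ (1 / m)))).toReal *
        Real.exp (-cG * (dist x y ^ m / t) ^ (1 / (m - 1)))) :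
    ∃ C > (0 : ℝ),
      ∀ t : ℝ, 0 < t → ∀ x : X,
        ∀ g : X → ℂ, Measurable g → (∃ Cb : ℝ, ∀ y : X, ‖g y‖ ≤ Cb) →
          (∫⁻ y, ENNReal.ofReal |p t x y| * (‖g y‖₊ : ℝ≥0∞) ^ 2 ∂μ) ≤
            ENNReal.ofReal C *
              ⨆ x' : X, (μ (ball x' (t ^ (1 / m))))⁻¹ *
                ∫⁻ y in ball x' (t ^ (1 / m)), (‖g y‖₊ : ℝ≥0∞) ^ 2 ∂μ :=
  gaussian_bound_average_domination_general μ hball Cd n hCd hdoub m hm p CG cG hCG hcG hGE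
end

section
/- Let (X,d,μ) be a doubling metric measure space with dimension n, m ≥ 2, and suppose the kernels (p_t)_{t>0} satisfy the m-order Gaussian upper bound (GE_m) and that for each t > 0 the integral operator g ↦ ∫_X p_t(·,w) g(w) dμ(w) is a contraction on L²(X,μ). For a ball B = B(x,r) set U_1(B) := B(x,2r) and U_k(B) := B(x,2^k r) ∖ B(x,2^{k−1} r) for k ≥ 2, and set E_1(u) := 1 and E_k(u) := exp(2^{mk/(m−1)} u) for k ≥ 2. Then there exist constants C, c > 0 such that for all t > 0, all integers k ≥ 1, all 0 < r₁ ≤ r₂, every x ∈ X and every bounded measurable g : X → ℂ: ( ⨍_{B(x,r₁)} | ∫_{U_k(B(x,r₂))} p_t(y,w) g(w) dμ(w) |² dμ(y) )^{1/2} ≤ C · E_k( −c (r₂ / t^{1/m})^{m/(m−1)} ) · ( μ(B(x, max{r₁, t^{1/m}}))^{-1} ∫_{U_k(B(x,r₂))} |g(w)|² dμ(w) )^{1/2}. -/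
/-!
Write `s = t^{1/m}` and `α = m/(m-1)`, so that `(GE_m)` reads
`|p_t(y,w)| ≤ C_G μ(B(y,s))⁻¹ exp(-c_G (d(y,w)/s)^α)`.

If `k = 1` and `s ≤ r₁`, the `L²` contraction alone suffices, since then `max{r₁, s} = r₁`.
Otherwise the inner integral is bounded pointwise for `y ∈ B(x,r₁)` by Cauchy–Schwarz with the
weight `|p_t(y,·)|`: `|∫_U p_t(y,·) g|² ≤ ‖p_t(y,·)‖_{L¹(U)} ∫_U |p_t(y,·)| |g|²`.
For `k = 1` and `r₁ < s`, the `L¹` norm of the kernel is bounded uniformly, because doubling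
controls the Gaussian tail ring by dyadic ring, and `μ(B(y,s)) ≈ μ(B(x,s))`.
For `k ≥ 2`, `U_k` stays at distance `2^k r₂/4` from `B(x,r₁)`, so on `U_k` the kernel is at
most `μ(B(y,s))⁻¹ exp(-2c θ^α)` with `θ = 2^k r₂/s`; the doubling losses
`μ(U_k)/μ(B(y,s))` and `μ(B(x,max{r₁,s}))/μ(B(y,s))` are polynomial in `θ` and are absorbed
by one of the two factors `exp(-c θ^α)`.
-/

open Metric MeasureTheory ENNReal

/-- The annulus `U_k(B(x,r))`: for `k = 1` it is `B(x,2r)`, and for `k ≥ 2` it is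
`B(x,2^k r) \ B(x,2^{k-1} r)`. -/
def annulusSet {X : Type*} [MetricSpace X] (x : X) (r : ℝ) (k : ℕ) : Set X :=
  if k = 1 then Metric.ball x (2 * r)
  else Metric.ball x (2 ^ k * r) \ Metric.ball x (2 ^ (k - 1) * r)

/-- The factor `E_k`: `E_1(u) = 1` and `E_k(u) = exp (2^{mk/(m-1)} u)` for `k ≥ 2`. -/
noncomputable def Efactor (m : ℝ) (k : ℕ) (u : ℝ) : ℝ :=
  if k = 1 then 1 else Real.exp (2 ^ (m * k / (m - 1)) * u)

lemma rpow_mul_exp_neg_le_factorial (n : ℝ) {c u : ℝ} (hc : 0 < c) (hu : 1 ≤ u) :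
    u ^ n * Real.exp (-c * u) ≤ Nat.factorial ⌈n⌉₊ / c ^ ⌈n⌉₊ := by
  set N := ⌈n⌉₊
  have hpow : u ^ n ≤ u ^ N := by
    rw [← Real.rpow_natCast]; exact Real.rpow_le_rpow_of_exponent_le hu (Nat.le_ceil n)
  have hfac : (c * u) ^ N ≤ Real.exp (c * u) * N.factorial :=
    (div_le_iff₀ (by positivity)).1 (Real.pow_div_factorial_le_exp _ (by positivity) N)
  rw [le_div_iff₀ (by positivity)]
  calc u ^ n * Real.exp (-c * u) * c ^ N ≤ u ^ N * Real.exp (-c * u) * c ^ N := by gcongr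
    _ = (c * u) ^ N * Real.exp (-(c * u)) := by ring_nf
    _ ≤ Real.exp (c * u) * N.factorial * Real.exp (-(c * u)) := by gcongr
    _ = N.factorial := by
      rw [mul_right_comm, ← Real.exp_add, add_neg_cancel, Real.exp_zero, one_mul]

lemma le_rpow_add_one {θ α : ℝ} (hθ : 0 ≤ θ) (hα : 1 ≤ α) : θ ≤ θ ^ α + 1 := by
  rcases le_total θ 1 with h | h
  · linarith [Real.rpow_nonneg hθ α]
  · linarith [Real.self_le_rpow_of_one_le h hα]

lemma two_add_two_mul_rpow_mul_exp_neg_le (n : ℝ) {c α θ : ℝ} (hc : 0 < c) (hα : 1 ≤ α)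
    (hθ : 0 ≤ θ) :
    (2 + 2 * θ) ^ n * Real.exp (-c * θ ^ α) ≤
      Real.exp (2 * c) * (Nat.factorial ⌈n⌉₊ / (c / 2) ^ ⌈n⌉₊) := by
  have hexp : Real.exp (-c * θ ^ α) ≤ Real.exp (2 * c) * Real.exp (-(c / 2) * (2 + 2 * θ)) := by
    rw [← Real.exp_add, Real.exp_le_exp]
    nlinarith [le_rpow_add_one hθ hα]
  calc (2 + 2 * θ) ^ n * Real.exp (-c * θ ^ α)
      ≤ (2 + 2 * θ) ^ n * (Real.exp (2 * c) * Real.exp (-(c / 2) * (2 + 2 * θ))) := by gcongr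
    _ = Real.exp (2 * c) * ((2 + 2 * θ) ^ n * Real.exp (-(c / 2) * (2 + 2 * θ))) := by ring
    _ ≤ _ := by
      gcongr
      exact rpow_mul_exp_neg_le_factorial n (by positivity) (by linarith)

lemma pow_succ_rpow_mul_exp_neg_le (n : ℝ) {c : ℝ} (hc : 0 < c) (j : ℕ) :
    ((2 : ℝ) ^ (j + 1)) ^ n * Real.exp (-c * 2 ^ j) ≤
      Nat.factorial ⌈n + 1⌉₊ / (c / 2) ^ ⌈n + 1⌉₊ / 2 / 2 ^ j := by
  have hu : (1 : ℝ) ≤ 2 ^ (j + 1) := one_le_pow₀ one_le_two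
  have key := rpow_mul_exp_neg_le_factorial (n + 1) (half_pos hc) hu
  rw [Real.rpow_add_one (by positivity), show -(c / 2) * 2 ^ (j + 1) = -c * 2 ^ j by ring]
    at key
  rw [div_div, ← pow_succ', le_div_iff₀ (by positivity)]
  linarith

lemma Efactor_neg_mul_rpow_of_ne_one {m c σ : ℝ} {k : ℕ} (hk : k ≠ 1) (hσ : 0 ≤ σ) :
    Efactor m k (-c * σ ^ (m / (m - 1))) = Real.exp (-c * (2 ^ k * σ) ^ (m / (m - 1))) := by
  rw [Efactor, if_neg hk, Real.mul_rpow (by positivity) hσ, ← Real.rpow_natCast_mul zero_le_two,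
    show m * k / (m - 1) = k * (m / (m - 1)) by ring]
  congr 1
  ring

lemma rpow_div_rpow_one_div_sub_one {d t m : ℝ} (hd : 0 ≤ d) (ht : 0 < t) (hm : m ≠ 0) :
    (d ^ m / t) ^ (1 / (m - 1)) = (d / t ^ (1 / m)) ^ (m / (m - 1)) := by
  rw [show d ^ m / t = (d / t ^ (1 / m)) ^ m by
      rw [Real.div_rpow hd (by positivity), ← Real.rpow_mul ht.le, one_div_mul_cancel hm,
        Real.rpow_one],
    ← Real.rpow_mul (by positivity), mul_one_div]

lemma exp_neg_rpow_div_four_mul_le (n : ℝ) {cG c α θ : ℝ} (hc : 0 < c) (hcG : cG = 2 * 4 ^ α * c)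
    (hα : 1 ≤ α) (hθ : 0 ≤ θ) :
    Real.exp (-cG * (θ / 4) ^ α) * (2 + 2 * θ) ^ n ≤
      Real.exp (2 * c) * (Nat.factorial ⌈n⌉₊ / (c / 2) ^ ⌈n⌉₊) * Real.exp (-c * θ ^ α) := by
  have hsplit : Real.exp (-cG * (θ / 4) ^ α) =
      Real.exp (-c * θ ^ α) * Real.exp (-c * θ ^ α) := by
    have h4 : (0 : ℝ) < 4 ^ α := by positivity
    rw [← Real.exp_add, Real.div_rpow hθ (by norm_num), hcG]
    congr 1
    field_simp
    ring
  calc Real.exp (-cG * (θ / 4) ^ α) * (2 + 2 * θ) ^ n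
      = (2 + 2 * θ) ^ n * Real.exp (-c * θ ^ α) * Real.exp (-c * θ ^ α) := by rw [hsplit]; ring
    _ ≤ _ := mul_le_mul_of_nonneg_right (two_add_two_mul_rpow_mul_exp_neg_le n hc hα hθ)
        (Real.exp_pos _).le

lemma ENNReal.rpow_two_inv_sq (x : ℝ≥0∞) : (x ^ (2⁻¹ : ℝ)) ^ 2 = x := by
  simpa using ENNReal.rpow_inv_natCast_pow two_ne_zero x

lemma ENNReal.sq_rpow_two_inv (x : ℝ≥0∞) : (x ^ 2) ^ (2⁻¹ : ℝ) = x := by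
  simpa using ENNReal.pow_rpow_inv_natCast two_ne_zero x

lemma ENNReal.rpow_one_half_le_mul_of_le_sq {a b c : ℝ≥0∞} (h : a ≤ c ^ 2 * b) :
    a ^ ((1 : ℝ) / 2) ≤ c * b ^ ((1 : ℝ) / 2) :=
  calc a ^ ((1 : ℝ) / 2) ≤ (c ^ 2 * b) ^ ((1 : ℝ) / 2) := ENNReal.rpow_le_rpow h (by norm_num)
    _ = c * b ^ ((1 : ℝ) / 2) := by
      rw [ENNReal.mul_rpow_of_nonneg _ _ (by norm_num), one_div, ENNReal.sq_rpow_two_inv]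

lemma sq_enorm_integral_mul_le {α 𝕜 : Type*} [MeasurableSpace α] [RCLike 𝕜] {ν : Measure α}
    {k g : α → 𝕜} (hk : AEMeasurable k ν) (hg : AEMeasurable g ν) :
    ‖∫ w, k w * g w ∂ν‖ₑ ^ 2 ≤ (∫⁻ w, ‖k w‖ₑ ∂ν) * ∫⁻ w, ‖k w‖ₑ * ‖g w‖ₑ ^ 2 ∂ν := by
  have hsplit : ∀ w, ‖k w * g w‖ₑ =
      ‖k w‖ₑ ^ (2⁻¹ : ℝ) * (‖k w‖ₑ * ‖g w‖ₑ ^ 2) ^ (2⁻¹ : ℝ) := fun w => by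
    rw [enorm_mul, ENNReal.mul_rpow_of_nonneg _ _ (by norm_num), ← mul_assoc,
      ← ENNReal.rpow_add_of_nonneg _ _ (by norm_num) (by norm_num), ENNReal.sq_rpow_two_inv]
    norm_num
  have holder := ENNReal.lintegral_mul_norm_pow_le hk.enorm
    (hk.enorm.mul (hg.enorm.pow_const 2)) (p := 2⁻¹) (q := 2⁻¹) (by norm_num) (by norm_num)
    (by norm_num)
  calc ‖∫ w, k w * g w ∂ν‖ₑ ^ 2 ≤ (∫⁻ w, ‖k w * g w‖ₑ ∂ν) ^ 2 := by
        gcongr; exact enorm_integral_le_lintegral_enorm _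
    _ ≤ ((∫⁻ w, ‖k w‖ₑ ∂ν) ^ (2⁻¹ : ℝ) *
          (∫⁻ w, ‖k w‖ₑ * ‖g w‖ₑ ^ 2 ∂ν) ^ (2⁻¹ : ℝ)) ^ 2 := by
        simp_rw [hsplit]; gcongr; exact holder
    _ = _ := by rw [mul_pow, ENNReal.rpow_two_inv_sq, ENNReal.rpow_two_inv_sq]

lemma lintegral_enorm_sq_eq_eLpNorm_sq {α E : Type*} [MeasurableSpace α] [NormedAddCommGroup E]
    (ν : Measure α) (f : α → E) : ∫⁻ w, ‖f w‖ₑ ^ 2 ∂ν = eLpNorm f 2 ν ^ 2 := by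
  simpa [ENNReal.rpow_two] using (eLpNorm_nnreal_pow_eq_lintegral (f := f) (μ := ν)
    (p := 2) two_ne_zero).symm

lemma ENNReal.inv_le_mul_inv_of_le_mul {a b D : ℝ≥0∞} (ha0 : a ≠ 0) (hatop : a ≠ ⊤)
    (h : a ≤ D * b) : b⁻¹ ≤ D * a⁻¹ := by
  rw [← div_eq_mul_inv, ENNReal.le_div_iff_mul_le (Or.inl ha0) (Or.inl hatop), mul_comm,
    ← div_eq_mul_inv]
  exact ENNReal.div_le_of_le_mul h

lemma inv_measure_mul_setLIntegral_le {α : Type*} [MeasurableSpace α] {μ : Measure α}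
    {B : Set α} (hB : MeasurableSet B) (hB0 : μ B ≠ 0) (hBtop : μ B ≠ ⊤) {f : α → ℝ≥0∞}
    {D : ℝ≥0∞} (h : ∀ y ∈ B, f y ≤ D) : (μ B)⁻¹ * ∫⁻ y in B, f y ∂μ ≤ D :=
  calc (μ B)⁻¹ * ∫⁻ y in B, f y ∂μ ≤ (μ B)⁻¹ * (D * μ B) := by
        gcongr; exact (setLIntegral_mono' hB h).trans_eq (setLIntegral_const B D)
    _ = D := by rw [mul_comm D, ← mul_assoc, ENNReal.inv_mul_cancel hB0 hBtop, one_mul]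

lemma setLIntegral_sq_enorm_setIntegral_le {α 𝕜 : Type*} [MeasurableSpace α] [RCLike 𝕜]
    {μ : Measure α} {K : α → α → 𝕜}
    (hK : ∀ h : α → 𝕜, MemLp h 2 μ →
      eLpNorm (fun y => ∫ w, K y w * h w ∂μ) 2 μ ≤ eLpNorm h 2 μ)
    {U : Set α} (hU : MeasurableSet U) {g : α → 𝕜} (hg : MemLp g 2 (μ.restrict U))
    (B : Set α) :
    ∫⁻ y in B, ‖∫ w in U, K y w * g w ∂μ‖ₑ ^ 2 ∂μ ≤ ∫⁻ w in U, ‖g w‖ₑ ^ 2 ∂μ := by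
  have hint : ∀ y, ∫ w in U, K y w * g w ∂μ = ∫ w, K y w * U.indicator g w ∂μ := fun y => by
    rw [← integral_indicator hU]
    congr 1; funext w; by_cases hw : w ∈ U <;> simp [hw]
  have hnorm : ∫⁻ w in U, ‖g w‖ₑ ^ 2 ∂μ = ∫⁻ w, ‖U.indicator g w‖ₑ ^ 2 ∂μ := by
    rw [← lintegral_indicator hU]
    congr 1; funext w; by_cases hw : w ∈ U <;> simp [hw]
  simp_rw [hint, hnorm]
  calc ∫⁻ y in B, ‖∫ w, K y w * U.indicator g w ∂μ‖ₑ ^ 2 ∂μ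
      ≤ ∫⁻ y, ‖∫ w, K y w * U.indicator g w ∂μ‖ₑ ^ 2 ∂μ := setLIntegral_le_lintegral _ _
    _ = eLpNorm (fun y => ∫ w, K y w * U.indicator g w ∂μ) 2 μ ^ 2 :=
        lintegral_enorm_sq_eq_eLpNorm_sq _ _
    _ ≤ eLpNorm (U.indicator g) 2 μ ^ 2 := by
        gcongr; exact hK _ ((memLp_indicator_iff_restrict hU).2 hg)
    _ = ∫⁻ w, ‖U.indicator g w‖ₑ ^ 2 ∂μ := (lintegral_enorm_sq_eq_eLpNorm_sq _ _).symm

lemma exp_neg_rpow_dist_le_indicator_add_tsum {X : Type*} [MetricSpace X] {c α s : ℝ}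
    (hc : 0 ≤ c) (hα : 1 ≤ α) (hs : 0 < s) (y w : X) :
    ENNReal.ofReal (Real.exp (-c * (dist y w / s) ^ α)) ≤
      (ball y s).indicator 1 w + ∑' j : ℕ, (ball y (2 ^ (j + 1) * s)).indicator
        (fun _ => ENNReal.ofReal (Real.exp (-c * 2 ^ j))) w := by
  rcases lt_or_ge (dist y w) s with hw | hw
  · have hmem : w ∈ ball y s := mem_ball'.2 hw
    refine le_add_right ?_
    rw [Set.indicator_of_mem hmem, Pi.one_apply, ENNReal.ofReal_le_one, Real.exp_le_one_iff]
    have := Real.rpow_nonneg (div_nonneg (dist_nonneg (x := y) (y := w)) hs.le) α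
    nlinarith
  · have hu : 1 ≤ dist y w / s := (one_le_div hs).2 hw
    obtain ⟨j, hj, hj'⟩ := exists_nat_pow_near hu one_lt_two
    have hmem : w ∈ ball y (2 ^ (j + 1) * s) := by
      rw [mem_ball', ← div_lt_iff₀ hs]; exact hj'
    refine le_add_left (le_trans ?_ (ENNReal.le_tsum j))
    rw [Set.indicator_of_mem hmem]
    refine ENNReal.ofReal_le_ofReal (Real.exp_le_exp.2 ?_)
    nlinarith [Real.self_le_rpow_of_one_le hu hα]

section Doubling

variable {X : Type*} [MetricSpace X] [MeasurableSpace X]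

def IsDoubling (μ : Measure X) (Cd n : ℝ) : Prop :=
  ∀ (x : X) (r lam : ℝ), 0 < r → 1 ≤ lam →
    μ (ball x (lam * r)) ≤ ENNReal.ofReal (Cd * lam ^ n) * μ (ball x r)

variable [BorelSpace X]

lemma IsDoubling.lintegral_exp_neg_rpow_dist_le {μ : Measure X} {Cd n c α : ℝ}
    (hμ : IsDoubling μ Cd n) (hCd : 0 ≤ Cd) (hc : 0 < c) (hα : 1 ≤ α) :
    ∃ A, ∀ (y : X) (s : ℝ), 0 < s →
      ∫⁻ w, ENNReal.ofReal (Real.exp (-c * (dist y w / s) ^ α)) ∂μ ≤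
        ENNReal.ofReal A * μ (ball y s) := by
  set M := Nat.factorial ⌈n + 1⌉₊ / (c / 2) ^ ⌈n + 1⌉₊
  refine ⟨1 + Cd * M, fun y s hs => ?_⟩
  calc ∫⁻ w, ENNReal.ofReal (Real.exp (-c * (dist y w / s) ^ α)) ∂μ
      ≤ ∫⁻ w, ((ball y s).indicator 1 w + ∑' j : ℕ, (ball y (2 ^ (j + 1) * s)).indicator
          (fun _ => ENNReal.ofReal (Real.exp (-c * 2 ^ j))) w) ∂μ :=
        lintegral_mono fun w => exp_neg_rpow_dist_le_indicator_add_tsum hc.le hα hs y w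
    _ = μ (ball y s) + ∑' j : ℕ,
          ENNReal.ofReal (Real.exp (-c * 2 ^ j)) * μ (ball y (2 ^ (j + 1) * s)) := by
        rw [lintegral_add_left (measurable_one.indicator measurableSet_ball),
          lintegral_tsum fun j => (measurable_const.indicator measurableSet_ball).aemeasurable]
        simp only [lintegral_indicator_one measurableSet_ball,
          lintegral_indicator_const measurableSet_ball]
    _ ≤ μ (ball y s) + ∑' j : ℕ, ENNReal.ofReal (Cd * M / 2 / 2 ^ j) * μ (ball y s) := by
        refine add_le_add_right (ENNReal.tsum_le_tsum fun j => ?_) _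
        calc ENNReal.ofReal (Real.exp (-c * 2 ^ j)) * μ (ball y (2 ^ (j + 1) * s))
            ≤ ENNReal.ofReal (Real.exp (-c * 2 ^ j)) *
                (ENNReal.ofReal (Cd * ((2 : ℝ) ^ (j + 1)) ^ n) * μ (ball y s)) := by
              gcongr; exact hμ y s _ hs (one_le_pow₀ one_le_two)
          _ = ENNReal.ofReal (Cd * (((2 : ℝ) ^ (j + 1)) ^ n * Real.exp (-c * 2 ^ j))) *
                μ (ball y s) := by
              rw [← mul_assoc, ← ENNReal.ofReal_mul (Real.exp_pos _).le, mul_left_comm,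
                mul_comm (Real.exp _)]
          _ ≤ ENNReal.ofReal (Cd * M / 2 / 2 ^ j) * μ (ball y s) := by
              gcongr
              rw [mul_div_assoc, mul_div_assoc]
              exact mul_le_mul_of_nonneg_left (pow_succ_rpow_mul_exp_neg_le n hc j) hCd
    _ = ENNReal.ofReal (1 + Cd * M) * μ (ball y s) := by
        have hM : 0 ≤ Cd * M := by positivity
        rw [ENNReal.tsum_mul_right, ← ENNReal.ofReal_tsum_of_nonneg (fun j => by positivity)
          (summable_geometric_two' _), tsum_geometric_two', ENNReal.ofReal_add zero_le_one hM,
          ENNReal.ofReal_one, add_mul, one_mul]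

end Doubling

section Annulus

variable {X : Type*} [MetricSpace X]

lemma measurableSet_annulusSet [MeasurableSpace X] [OpensMeasurableSpace X] (x : X) (r : ℝ)
    (k : ℕ) : MeasurableSet (annulusSet x r k) := by
  unfold annulusSet; split_ifs
  · exact measurableSet_ball
  · exact measurableSet_ball.diff measurableSet_ball

lemma annulusSet_subset_ball (x : X) (r : ℝ) (k : ℕ) : annulusSet x r k ⊆ ball x (2 ^ k * r) := by
  unfold annulusSet; split_ifs with h
  · simp [h]
  · exact Set.sdiff_subset

lemma le_dist_of_mem_annulusSet {x y w : X} {r₁ r : ℝ} {k : ℕ} (hk : k ≠ 1) (hr : r₁ ≤ r)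
    (hy : y ∈ ball x r₁) (hw : w ∈ annulusSet x r k) : 2 ^ k * r / 4 ≤ dist y w := by
  rcases k with _ | _ | k
  · simp [annulusSet] at hw
  · exact absurd rfl hk
  · simp only [annulusSet, add_tsub_cancel_right, Set.mem_sdiff, mem_ball,
      not_lt, show k + 1 + 1 ≠ 1 by omega, if_false] at hw
    have hyx : dist y x < r₁ := hy
    have h2k : (1 : ℝ) ≤ 2 ^ k := one_le_pow₀ one_le_two
    have hr0 : 0 < r := (dist_nonneg.trans_lt hyx).trans_le hr
    have htri := dist_triangle w y x
    rw [dist_comm w y] at htri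
    nlinarith [pow_succ (2 : ℝ) k, pow_succ (2 : ℝ) (k + 1)]

end Annulus

section GaussianBound

variable {X 𝕜 : Type*} [MetricSpace X] [MeasurableSpace X] [RCLike 𝕜]

/-- `(GE_m)` at time `t`, written at the scale `s = t^{1/m}` with `α = m/(m-1)`. -/
def GaussianBoundAt (μ : Measure X) (K : X → X → 𝕜) (s CG cG α : ℝ) : Prop :=
  ∀ y w, ‖K y w‖ₑ ≤ ENNReal.ofReal CG * (μ (ball y s))⁻¹ *
    ENNReal.ofReal (Real.exp (-cG * (dist y w / s) ^ α))

lemma gaussianBoundAt_of_abs_le {μ : Measure X} {p : X → X → ℝ} {t m CG cG : ℝ} (ht : 0 < t)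
    (hm : m ≠ 0) (hCG : 0 ≤ CG)
    (h : ∀ y w, |p y w| ≤ CG / (μ (ball y (t ^ (1 / m)))).toReal *
      Real.exp (-cG * (dist y w ^ m / t) ^ (1 / (m - 1)))) :
    GaussianBoundAt μ (fun y w => (p y w : 𝕜)) (t ^ (1 / m)) CG cG (m / (m - 1)) := by
  intro y w
  have hyw := h y w
  rw [rpow_div_rpow_one_div_sub_one dist_nonneg ht hm] at hyw
  rw [← ofReal_norm, RCLike.norm_ofReal]
  rcases (ENNReal.toReal_nonneg (a := μ (ball y (t ^ (1 / m))))).eq_or_lt with h0 | hpos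
  · rw [← h0, _root_.div_zero, zero_mul] at hyw
    simp [abs_nonpos_iff.1 hyw]
  · refine (ENNReal.ofReal_le_ofReal hyw).trans_eq ?_
    rw [ENNReal.ofReal_mul (by positivity), ENNReal.ofReal_div_of_pos hpos,
      ENNReal.ofReal_toReal (ENNReal.toReal_pos_iff.1 hpos).2.ne, div_eq_mul_inv]

variable {μ : Measure X} {K : X → X → 𝕜} {s CG cG α : ℝ}

lemma GaussianBoundAt.enorm_le (hK : GaussianBoundAt μ K s CG cG α) (hcG : 0 ≤ cG)
    (hs : 0 ≤ s) (y w : X) : ‖K y w‖ₑ ≤ ENNReal.ofReal CG * (μ (ball y s))⁻¹ := by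
  refine (hK y w).trans (mul_le_of_le_one_right' ?_)
  rw [ENNReal.ofReal_le_one, Real.exp_le_one_iff]
  have := Real.rpow_nonneg (div_nonneg (dist_nonneg (x := y) (y := w)) hs) α
  nlinarith

lemma GaussianBoundAt.enorm_le_of_mul_le_dist (hK : GaussianBoundAt μ K s CG cG α)
    (hcG : 0 ≤ cG) (hα : 0 ≤ α) (hs : 0 < s) {δ : ℝ} (hδ : 0 ≤ δ) {y w : X}
    (hdist : δ * s ≤ dist y w) :
    ‖K y w‖ₑ ≤ ENNReal.ofReal (CG * Real.exp (-cG * δ ^ α)) * (μ (ball y s))⁻¹ := by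
  have hδs : δ ^ α ≤ (dist y w / s) ^ α :=
    Real.rpow_le_rpow hδ ((le_div_iff₀ hs).2 hdist) hα
  calc ‖K y w‖ₑ ≤ ENNReal.ofReal CG * (μ (ball y s))⁻¹ *
        ENNReal.ofReal (Real.exp (-cG * δ ^ α)) :=
      (hK y w).trans (by gcongr _ * ENNReal.ofReal (Real.exp ?_); nlinarith)
    _ = _ := by rw [ENNReal.ofReal_mul' (Real.exp_pos _).le, mul_right_comm]

lemma GaussianBoundAt.lintegral_enorm_le (hK : GaussianBoundAt μ K s CG cG α) {y : X} {A : ℝ}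
    (hA : ∫⁻ w, ENNReal.ofReal (Real.exp (-cG * (dist y w / s) ^ α)) ∂μ ≤
      ENNReal.ofReal A * μ (ball y s))
    (h0 : μ (ball y s) ≠ 0) (htop : μ (ball y s) ≠ ⊤) :
    ∫⁻ w, ‖K y w‖ₑ ∂μ ≤ ENNReal.ofReal CG * ENNReal.ofReal A :=
  calc ∫⁻ w, ‖K y w‖ₑ ∂μ
      ≤ ∫⁻ w, ENNReal.ofReal CG * (μ (ball y s))⁻¹ *
          ENNReal.ofReal (Real.exp (-cG * (dist y w / s) ^ α)) ∂μ := lintegral_mono (hK y)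
    _ = ENNReal.ofReal CG * (μ (ball y s))⁻¹ *
          ∫⁻ w, ENNReal.ofReal (Real.exp (-cG * (dist y w / s) ^ α)) ∂μ :=
        lintegral_const_mul' _ _ (ENNReal.mul_ne_top ENNReal.ofReal_ne_top (by simpa using h0))
    _ ≤ ENNReal.ofReal CG * (μ (ball y s))⁻¹ * (ENNReal.ofReal A * μ (ball y s)) := by gcongr
    _ = ENNReal.ofReal CG * ENNReal.ofReal A := by
        rw [mul_comm (ENNReal.ofReal A), ← mul_assoc, mul_assoc _ _ (μ (ball y s)),
          ENNReal.inv_mul_cancel h0 htop, mul_one]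

lemma GaussianBoundAt.sq_enorm_setIntegral_le_of_dist_le {Cd n : ℝ}
    (hK : GaussianBoundAt μ K s CG cG α) (hμ : IsDoubling μ Cd n) (hCG : 0 ≤ CG)
    (hcG : 0 ≤ cG) (hs : 0 < s) {x y : X} {A : ℝ}
    (hA : ∫⁻ w, ENNReal.ofReal (Real.exp (-cG * (dist y w / s) ^ α)) ∂μ ≤
      ENNReal.ofReal A * μ (ball y s))
    (hy0 : μ (ball y s) ≠ 0) (hytop : μ (ball y s) ≠ ⊤)
    (hx0 : μ (ball x s) ≠ 0) (hxtop : μ (ball x s) ≠ ⊤) (hxy : dist x y ≤ s)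
    {U : Set X} {g : X → 𝕜} (hKm : AEMeasurable (K y) (μ.restrict U))
    (hg : AEMeasurable g (μ.restrict U)) :
    ‖∫ w in U, K y w * g w ∂μ‖ₑ ^ 2 ≤
      ENNReal.ofReal (CG * A) * ENNReal.ofReal (CG * (Cd * 2 ^ n)) *
        ((μ (ball x s))⁻¹ * ∫⁻ w in U, ‖g w‖ₑ ^ 2 ∂μ) := by
  have hcomp : (μ (ball y s))⁻¹ ≤ ENNReal.ofReal (Cd * 2 ^ n) * (μ (ball x s))⁻¹ := by
    refine ENNReal.inv_le_mul_inv_of_le_mul hx0 hxtop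
      ((measure_mono (ball_subset_ball' (by linarith))).trans (hμ y s 2 hs one_le_two))
  have hKint : ∫⁻ w in U, ‖K y w‖ₑ ∂μ ≤ ENNReal.ofReal CG * ENNReal.ofReal A :=
    (setLIntegral_le_lintegral _ _).trans (hK.lintegral_enorm_le hA hy0 hytop)
  have hKgint : ∫⁻ w in U, ‖K y w‖ₑ * ‖g w‖ₑ ^ 2 ∂μ ≤
      ENNReal.ofReal CG * (μ (ball y s))⁻¹ * ∫⁻ w in U, ‖g w‖ₑ ^ 2 ∂μ := by
    rw [← lintegral_const_mul' _ _ (ENNReal.mul_ne_top ENNReal.ofReal_ne_top (by simpa using hy0))]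
    exact lintegral_mono fun w => by gcongr; exact hK.enorm_le hcG hs.le y w
  calc ‖∫ w in U, K y w * g w ∂μ‖ₑ ^ 2
      ≤ (∫⁻ w in U, ‖K y w‖ₑ ∂μ) * ∫⁻ w in U, ‖K y w‖ₑ * ‖g w‖ₑ ^ 2 ∂μ :=
        sq_enorm_integral_mul_le hKm hg
    _ ≤ (ENNReal.ofReal CG * ENNReal.ofReal A) *
          (ENNReal.ofReal CG * (ENNReal.ofReal (Cd * 2 ^ n) * (μ (ball x s))⁻¹) *
            ∫⁻ w in U, ‖g w‖ₑ ^ 2 ∂μ) := by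
        gcongr
        exact hKgint.trans (by gcongr)
    _ = _ := by rw [ENNReal.ofReal_mul hCG, ENNReal.ofReal_mul hCG]; ring

lemma GaussianBoundAt.sq_enorm_setIntegral_le_of_mul_le_dist {Cd n : ℝ}
    (hK : GaussianBoundAt μ K s CG cG α) (hμ : IsDoubling μ Cd n) (hCG : 0 ≤ CG)
    (hcG : 0 ≤ cG) (hα : 0 ≤ α) (hs : 0 < s) {y : X}
    (hy0 : μ (ball y s) ≠ 0) (hytop : μ (ball y s) ≠ ⊤) {lam δ : ℝ} (hlam : 1 ≤ lam)
    (hδ : 0 ≤ δ) {U B : Set X} (hU : MeasurableSet U) (hUy : U ⊆ ball y (lam * s))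
    (hBy : B ⊆ ball y (lam * s)) (hB0 : μ B ≠ 0) (hBtop : μ B ≠ ⊤)
    (hδU : ∀ w ∈ U, δ * s ≤ dist y w) {g : X → 𝕜} (hKm : AEMeasurable (K y) (μ.restrict U))
    (hg : AEMeasurable g (μ.restrict U)) :
    ‖∫ w in U, K y w * g w ∂μ‖ₑ ^ 2 ≤
      ENNReal.ofReal (CG * Real.exp (-cG * δ ^ α) * (Cd * lam ^ n)) ^ 2 *
        ((μ B)⁻¹ * ∫⁻ w in U, ‖g w‖ₑ ^ 2 ∂μ) := by
  set κ := ENNReal.ofReal (CG * Real.exp (-cG * δ ^ α)) * (μ (ball y s))⁻¹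
  set D := ENNReal.ofReal (Cd * lam ^ n)
  have hκ : ∀ w ∈ U, ‖K y w‖ₑ ≤ κ := fun w hw =>
    hK.enorm_le_of_mul_le_dist hcG hα hs hδ (hδU w hw)
  have hUD : (μ (ball y s))⁻¹ * μ U ≤ D :=
    calc (μ (ball y s))⁻¹ * μ U ≤ (μ (ball y s))⁻¹ * (D * μ (ball y s)) := by
          gcongr; exact (measure_mono hUy).trans (hμ y s lam hs hlam)
      _ = D := by rw [mul_comm D, ← mul_assoc, ENNReal.inv_mul_cancel hy0 hytop, one_mul]
  have hBD : (μ (ball y s))⁻¹ ≤ D * (μ B)⁻¹ := ENNReal.inv_le_mul_inv_of_le_mul hB0 hBtop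
    ((measure_mono hBy).trans (hμ y s lam hs hlam))
  have hKint : ∫⁻ w in U, ‖K y w‖ₑ ∂μ ≤ κ * μ U :=
    (setLIntegral_mono' hU hκ).trans_eq (setLIntegral_const _ _)
  have hKgint : ∫⁻ w in U, ‖K y w‖ₑ * ‖g w‖ₑ ^ 2 ∂μ ≤ κ * ∫⁻ w in U, ‖g w‖ₑ ^ 2 ∂μ := by
    rw [← lintegral_const_mul' _ _ (ENNReal.mul_ne_top ENNReal.ofReal_ne_top (by simpa using hy0))]
    exact setLIntegral_mono' hU fun w hw => by gcongr; exact hκ w hw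
  calc ‖∫ w in U, K y w * g w ∂μ‖ₑ ^ 2
      ≤ (∫⁻ w in U, ‖K y w‖ₑ ∂μ) * ∫⁻ w in U, ‖K y w‖ₑ * ‖g w‖ₑ ^ 2 ∂μ :=
        sq_enorm_integral_mul_le hKm hg
    _ ≤ (κ * μ U) * (κ * ∫⁻ w in U, ‖g w‖ₑ ^ 2 ∂μ) := by gcongr
    _ = ENNReal.ofReal (CG * Real.exp (-cG * δ ^ α)) ^ 2 *
          ((μ (ball y s))⁻¹ * ((μ (ball y s))⁻¹ * μ U)) * ∫⁻ w in U, ‖g w‖ₑ ^ 2 ∂μ := by ring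
    _ ≤ ENNReal.ofReal (CG * Real.exp (-cG * δ ^ α)) ^ 2 * (D * (μ B)⁻¹ * D) *
          ∫⁻ w in U, ‖g w‖ₑ ^ 2 ∂μ := by gcongr
    _ = _ := by rw [ENNReal.ofReal_mul (p := CG * Real.exp (-cG * δ ^ α)) (by positivity)]; ring

end GaussianBound

lemma sq_average_annulusSet_le_of_eLpNorm_le {X 𝕜 : Type*} [MetricSpace X] [MeasurableSpace X]
    [BorelSpace X] [RCLike 𝕜] {μ : Measure X} {K : X → X → 𝕜}
    (hK : ∀ h : X → 𝕜, MemLp h 2 μ →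
      eLpNorm (fun y => ∫ w, K y w * h w ∂μ) 2 μ ≤ eLpNorm h 2 μ)
    (hball : ∀ (x : X) (r : ℝ), 0 < r → 0 < μ (ball x r) ∧ μ (ball x r) < ⊤)
    {g : X → 𝕜} (hg : Measurable g) {Cb : ℝ} (hCb : ∀ y, ‖g y‖ ≤ Cb)
    {x : X} {r₁ r₂ s : ℝ} {k : ℕ} (hr₂ : 0 < r₂) (hsr : s ≤ r₁) :
    (μ (ball x r₁))⁻¹ * ∫⁻ y in ball x r₁, ‖∫ w in annulusSet x r₂ k, K y w * g w ∂μ‖ₑ ^ 2 ∂μ ≤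
      (μ (ball x (max r₁ s)))⁻¹ * ∫⁻ w in annulusSet x r₂ k, ‖g w‖ₑ ^ 2 ∂μ := by
  have hUfin : μ (annulusSet x r₂ k) ≠ ⊤ :=
    ((measure_mono (annulusSet_subset_ball x r₂ k)).trans_lt (hball x _ (by positivity)).2).ne
  have := isFiniteMeasure_restrict.2 hUfin
  rw [max_eq_left hsr]
  gcongr (μ (ball x r₁))⁻¹ * ?_
  exact setLIntegral_sq_enorm_setIntegral_le hK (measurableSet_annulusSet x r₂ k)
    (MemLp.of_bound hg.aestronglyMeasurable Cb (.of_forall hCb)) _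

section OffDiagonal

variable {X 𝕜 : Type*} [MetricSpace X] [MeasurableSpace X] [BorelSpace X] [RCLike 𝕜]
  {μ : Measure X} {K : X → X → 𝕜} {s CG cG α Cd n : ℝ}

lemma GaussianBoundAt.sq_average_le_of_radius_lt (hK : GaussianBoundAt μ K s CG cG α)
    (hμ : IsDoubling μ Cd n)
    (hball : ∀ (x : X) (r : ℝ), 0 < r → 0 < μ (ball x r) ∧ μ (ball x r) < ⊤)
    (hCG : 0 ≤ CG) (hcG : 0 ≤ cG) (hs : 0 < s) {A : ℝ}
    (hA : ∀ y, ∫⁻ w, ENNReal.ofReal (Real.exp (-cG * (dist y w / s) ^ α)) ∂μ ≤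
      ENNReal.ofReal A * μ (ball y s))
    (hKm : ∀ y, Measurable (K y)) {g : X → 𝕜} (hg : Measurable g) {x : X} {r₁ : ℝ}
    (hr₁ : 0 < r₁) (hr₁s : r₁ < s) (U : Set X) :
    (μ (ball x r₁))⁻¹ * ∫⁻ y in ball x r₁, ‖∫ w in U, K y w * g w ∂μ‖ₑ ^ 2 ∂μ ≤
      ENNReal.ofReal (CG * A) * ENNReal.ofReal (CG * (Cd * 2 ^ n)) *
        ((μ (ball x (max r₁ s)))⁻¹ * ∫⁻ w in U, ‖g w‖ₑ ^ 2 ∂μ) := by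
  rw [max_eq_right hr₁s.le]
  refine inv_measure_mul_setLIntegral_le measurableSet_ball (hball x r₁ hr₁).1.ne'
    (hball x r₁ hr₁).2.ne fun y hy => ?_
  have hxy : dist x y ≤ s := by rw [dist_comm]; exact (mem_ball.1 hy).le.trans hr₁s.le
  exact hK.sq_enorm_setIntegral_le_of_dist_le hμ hCG hcG hs (hA y) (hball y s hs).1.ne'
    (hball y s hs).2.ne (hball x s hs).1.ne' (hball x s hs).2.ne hxy (hKm y).aemeasurable
    hg.aemeasurable

lemma GaussianBoundAt.sq_average_annulusSet_le_of_ne_one (hK : GaussianBoundAt μ K s CG cG α)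
    (hμ : IsDoubling μ Cd n)
    (hball : ∀ (x : X) (r : ℝ), 0 < r → 0 < μ (ball x r) ∧ μ (ball x r) < ⊤)
    (hCG : 0 ≤ CG) (hCd : 0 ≤ Cd) {c : ℝ} (hc : 0 < c) (hcG : cG = 2 * 4 ^ α * c)
    (hα : 1 ≤ α) (hs : 0 < s) (hKm : ∀ y, Measurable (K y)) {g : X → 𝕜} (hg : Measurable g)
    {x : X} {r₁ r₂ : ℝ} {k : ℕ} (hk : k ≠ 1) (hr₁ : 0 < r₁) (hr₁₂ : r₁ ≤ r₂) :
    (μ (ball x r₁))⁻¹ * ∫⁻ y in ball x r₁, ‖∫ w in annulusSet x r₂ k, K y w * g w ∂μ‖ₑ ^ 2 ∂μ ≤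
      ENNReal.ofReal (CG * Cd * (Real.exp (2 * c) * (Nat.factorial ⌈n⌉₊ / (c / 2) ^ ⌈n⌉₊)) *
          Real.exp (-c * (2 ^ k * (r₂ / s)) ^ α)) ^ 2 *
        ((μ (ball x (max r₁ s)))⁻¹ * ∫⁻ w in annulusSet x r₂ k, ‖g w‖ₑ ^ 2 ∂μ) := by
  set θ := 2 ^ k * (r₂ / s)
  have hr₂0 : 0 < r₂ := hr₁.trans_le hr₁₂
  have hθ : 0 ≤ θ := by positivity
  have hθs : θ * s = 2 ^ k * r₂ := by simp only [θ]; field_simp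
  have hr₂ : r₂ ≤ 2 ^ k * r₂ := le_mul_of_one_le_left hr₂0.le (one_le_pow₀ one_le_two)
  have hmax : max r₁ s ≤ r₁ + s :=
    max_le (le_add_of_nonneg_right hs.le) (le_add_of_nonneg_left hr₁.le)
  have hmax0 : 0 < max r₁ s := lt_max_of_lt_left hr₁
  have hconst : CG * Real.exp (-cG * (θ / 4) ^ α) * (Cd * (2 + 2 * θ) ^ n) ≤
      CG * Cd * (Real.exp (2 * c) * (Nat.factorial ⌈n⌉₊ / (c / 2) ^ ⌈n⌉₊)) *
        Real.exp (-c * θ ^ α) := by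
    rw [mul_assoc (CG * Cd)]
    calc CG * Real.exp (-cG * (θ / 4) ^ α) * (Cd * (2 + 2 * θ) ^ n)
        = CG * Cd * (Real.exp (-cG * (θ / 4) ^ α) * (2 + 2 * θ) ^ n) := by ring
      _ ≤ _ := mul_le_mul_of_nonneg_left (exp_neg_rpow_div_four_mul_le n hc hcG hα hθ)
          (by positivity)
  refine inv_measure_mul_setLIntegral_le measurableSet_ball (hball x r₁ hr₁).1.ne'
    (hball x r₁ hr₁).2.ne fun y hy => ?_
  have hxy : dist x y < r₁ := by rw [dist_comm]; exact hy
  refine (hK.sq_enorm_setIntegral_le_of_mul_le_dist hμ hCG (by rw [hcG]; positivity)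
    (by linarith) hs (hball y s hs).1.ne' (hball y s hs).2.ne (lam := 2 + 2 * θ) (δ := θ / 4)
    (by linarith) (by positivity) (measurableSet_annulusSet x r₂ k) ?_ ?_
    (hball x _ hmax0).1.ne' (hball x _ hmax0).2.ne ?_ (hKm y).aemeasurable
    hg.aemeasurable).trans ?_
  · exact (annulusSet_subset_ball x r₂ k).trans (ball_subset_ball' (by nlinarith))
  · exact ball_subset_ball' (by nlinarith)
  · intro w hw
    rw [div_mul_eq_mul_div, hθs]
    exact le_dist_of_mem_annulusSet hk hr₁₂ hy hw
  · gcongr ENNReal.ofReal ?_ ^ 2 * _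

end OffDiagonal

theorem gaussian_L2_off_diagonal_estimate_general
    {X : Type*} [MetricSpace X] [MeasurableSpace X] [BorelSpace X]
    (μ : Measure X)
    (hball : ∀ (x : X) (r : ℝ), 0 < r → 0 < μ (ball x r) ∧ μ (ball x r) < ⊤)
    (Cd n : ℝ) (hCd : 0 < Cd)
    (hdoub : ∀ (x : X) (r lam : ℝ), 0 < r → 1 ≤ lam →
      μ (ball x (lam * r)) ≤ ENNReal.ofReal (Cd * lam ^ n) * μ (ball x r))
    (m : ℝ) (hm : 2 ≤ m)
    (p : ℝ → X → X → ℝ)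
    (hmeas : ∀ t : ℝ, 0 < t → Measurable (Function.uncurry (p t)))
    (CG cG : ℝ) (hCG : 0 < CG) (hcG : 0 < cG)
    (hGE : ∀ t : ℝ, 0 < t → ∀ x y : X,
      |p t x y| ≤ CG / (μ (ball x (t ^ (1 / m)))).toReal *
        Real.exp (-cG * (dist x y ^ m / t) ^ (1 / (m - 1))))
    (hcontr : ∀ t : ℝ, 0 < t → ∀ g : X → ℂ, MemLp g 2 μ →
      eLpNorm (fun y : X => ∫ w, (p t y w : ℂ) * g w ∂μ) 2 μ ≤ eLpNorm g 2 μ) :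
    ∃ C > (0 : ℝ), ∃ c > (0 : ℝ),
      ∀ t : ℝ, 0 < t → ∀ k : ℕ, 1 ≤ k → ∀ r₁ r₂ : ℝ, 0 < r₁ → r₁ ≤ r₂ →
        ∀ x : X, ∀ g : X → ℂ, Measurable g → (∃ Cb : ℝ, ∀ y : X, ‖g y‖ ≤ Cb) →
          ((μ (ball x r₁))⁻¹ *
              ∫⁻ y in ball x r₁,
                (‖∫ w in annulusSet x r₂ k, (p t y w : ℂ) * g w ∂μ‖₊ : ℝ≥0∞) ^ 2 ∂μ) ^
              ((1 : ℝ) / 2) ≤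
            ENNReal.ofReal
                (C * Efactor m k (-c * (r₂ / t ^ (1 / m)) ^ (m / (m - 1)))) *
              ((μ (ball x (max r₁ (t ^ (1 / m)))))⁻¹ *
                  ∫⁻ w in annulusSet x r₂ k, (‖g w‖₊ : ℝ≥0∞) ^ 2 ∂μ) ^ ((1 : ℝ) / 2) := by
  set α := m / (m - 1)
  have hα : 1 ≤ α := by rw [le_div_iff₀ (by linarith)]; linarith
  obtain ⟨A, hA⟩ := IsDoubling.lintegral_exp_neg_rpow_dist_le hdoub hCd.le hcG hα
  set c := cG / (2 * 4 ^ α)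
  set M := Real.exp (2 * c) * (Nat.factorial ⌈n⌉₊ / (c / 2) ^ ⌈n⌉₊)
  set C := max (max 1 (CG * A)) (max (CG * (Cd * 2 ^ n)) (CG * Cd * M))
  have hC : 1 ≤ C := le_max_of_le_left (le_max_left _ _)
  refine ⟨C, by linarith, c, by positivity, fun t ht k hk r₁ r₂ hr₁ hr₁₂ x g hg ⟨Cb, hCb⟩ => ?_⟩
  set s := t ^ (1 / m)
  have hs : 0 < s := by positivity
  have hr₂ : 0 < r₂ := hr₁.trans_le hr₁₂
  have hK := gaussianBoundAt_of_abs_le (𝕜 := ℂ) ht (by linarith) hCG.le (hGE t ht)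
  have hKm : ∀ y, Measurable fun w => (p t y w : ℂ) := fun y =>
    Complex.measurable_ofReal.comp ((hmeas t ht).comp measurable_prodMk_left)
  simp only [← enorm_eq_nnnorm]
  refine ENNReal.rpow_one_half_le_mul_of_le_sq ?_
  rcases eq_or_ne k 1 with rfl | hk1
  · rw [Efactor, if_pos rfl, mul_one, sq]
    rcases le_or_gt s r₁ with hsr | hrs
    · refine (sq_average_annulusSet_le_of_eLpNorm_le (hcontr t ht) hball hg hCb
        hr₂ hsr).trans (le_mul_of_one_le_left' ?_)
      exact one_le_mul (ENNReal.one_le_ofReal.2 hC) (ENNReal.one_le_ofReal.2 hC)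
    · refine (hK.sq_average_le_of_radius_lt hdoub hball hCG.le hcG.le hs (fun y => hA y s hs)
        hKm hg hr₁ hrs _).trans ?_
      gcongr
      exacts [le_max_of_le_left (le_max_right _ _), le_max_of_le_right (le_max_left _ _)]
  · rw [Efactor_neg_mul_rpow_of_ne_one hk1 (by positivity)]
    refine (hK.sq_average_annulusSet_le_of_ne_one hdoub hball hCG.le hCd.le (by positivity)
      (mul_div_cancel₀ cG (by positivity)).symm hα hs hKm hg hk1 hr₁ hr₁₂).trans ?_
    gcongr ENNReal.ofReal (?_ * _) ^ 2 * _
    exact le_max_of_le_right (le_max_right _ _)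

/-- `L₂`-Gaussian (off-diagonal) estimates: on a doubling metric measure
space of dimension `n`, if the kernels `p_t` satisfy `(GE_m)` and each `S_t` is an
`L²`-contraction, then there exist `C, c > 0` such that for all `t > 0`, `k ≥ 1`,
`0 < r₁ ≤ r₂`, `x ∈ X` and bounded measurable `g`,
`(⨍_{B(x,r₁)} |∫_{U_k(B(x,r₂))} p_t(y,w) g(w) dμ(w)|² dμ(y))^{1/2}
  ≤ C E_k(-c (r₂/t^{1/m})^{m/(m-1)}) (μ(B(x,max{r₁,t^{1/m}}))⁻¹ ∫_{U_k(B(x,r₂))} |g|² dμ)^{1/2}`. -/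
theorem gaussian_L2_off_diagonal_estimate
    {X : Type*} [MetricSpace X] [MeasurableSpace X] [BorelSpace X]
    (μ : Measure X)
    (hball : ∀ (x : X) (r : ℝ), 0 < r → 0 < μ (ball x r) ∧ μ (ball x r) < ⊤)
    (Cd n : ℝ) (hCd : 0 < Cd) (hn : 0 < n)
    (hdoub : ∀ (x : X) (r lam : ℝ), 0 < r → 1 ≤ lam →
      μ (ball x (lam * r)) ≤ ENNReal.ofReal (Cd * lam ^ n) * μ (ball x r))
    (m : ℝ) (hm : 2 ≤ m)
    (p : ℝ → X → X → ℝ)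
    (hmeas : ∀ t : ℝ, 0 < t → Measurable (Function.uncurry (p t)))
    (CG cG : ℝ) (hCG : 0 < CG) (hcG : 0 < cG)
    (hGE : ∀ t : ℝ, 0 < t → ∀ x y : X,
      |p t x y| ≤ CG / (μ (ball x (t ^ (1 / m)))).toReal *
        Real.exp (-cG * (dist x y ^ m / t) ^ (1 / (m - 1))))
    (hcontr : ∀ t : ℝ, 0 < t → ∀ g : X → ℂ, MemLp g 2 μ →
      eLpNorm (fun y : X => ∫ w, (p t y w : ℂ) * g w ∂μ) 2 μ ≤ eLpNorm g 2 μ) :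
    ∃ C > (0 : ℝ), ∃ c > (0 : ℝ),
      ∀ t : ℝ, 0 < t → ∀ k : ℕ, 1 ≤ k → ∀ r₁ r₂ : ℝ, 0 < r₁ → r₁ ≤ r₂ →
        ∀ x : X, ∀ g : X → ℂ, Measurable g → (∃ Cb : ℝ, ∀ y : X, ‖g y‖ ≤ Cb) →
          ((μ (ball x r₁))⁻¹ *
              ∫⁻ y in ball x r₁,
                (‖∫ w in annulusSet x r₂ k, (p t y w : ℂ) * g w ∂μ‖₊ : ℝ≥0∞) ^ 2 ∂μ) ^
              ((1 : ℝ) / 2) ≤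
            ENNReal.ofReal
                (C * Efactor m k (-c * (r₂ / t ^ (1 / m)) ^ (m / (m - 1)))) *
              ((μ (ball x (max r₁ (t ^ (1 / m)))))⁻¹ *
                  ∫⁻ w in annulusSet x r₂ k, (‖g w‖₊ : ℝ≥0∞) ^ 2 ∂μ) ^ ((1 : ℝ) / 2) :=
  gaussian_L2_off_diagonal_estimate_general μ hball Cd n hCd hdoub m hm p hmeas CG cG hCG hcG hGE
    hcontr
end

section
/- Let φ : ℝ → ℂ be a smooth function with compact support contained in the open interval (1/4, 1), and let s > 0. Then for every a ∈ ℕ there exists a constant C = C(a, s, φ) > 0 such that for all ℓ ∈ ℤ, all t ∈ ℝ and all τ ∈ ℝ: | ∫_ℝ φ(u) e^{i(2^ℓ t − τ)u} (1 + 2^ℓ u)^{−s} du | ≤ C · min{1, 2^{−ℓ s}} · (1 + |2^ℓ t − τ|)^{−a}. -/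
open Real Filter Topology MeasureTheory FourierTransform

lemma aux_deriv_formula (s b c : ℝ) :
    ∀ (k : ℕ) (u : ℝ), 0 < b + c * u →
      iteratedDeriv k (fun v : ℝ => (((b + c * v) ^ (-s) : ℝ) : ℂ)) u
        = ((c ^ k * (∏ j ∈ Finset.range k, (-s - j)) * (b + c * u) ^ (-s - k) : ℝ) : ℂ) := by
  intro k
  induction k with
  | zero => intro u hu; simp
  | succ k ih =>
    intro u hu
    rw [iteratedDeriv_succ]
    have hop : IsOpen {v : ℝ | 0 < b + c * v} :=
      isOpen_lt continuous_const (by continuity)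
    have hev : iteratedDeriv k (fun v : ℝ => (((b + c * v) ^ (-s) : ℝ) : ℂ)) =ᶠ[𝓝 u]
        fun v => ((c ^ k * (∏ j ∈ Finset.range k, (-s - j)) * (b + c * v) ^ (-s - k) : ℝ) : ℂ) := by
      filter_upwards [hop.mem_nhds hu] with v hv using ih v hv
    rw [hev.deriv_eq]
    have h1 : HasDerivAt (fun v : ℝ => b + c * v) c u := by
      simpa using ((hasDerivAt_id u).const_mul c).const_add b
    have h2 : HasDerivAt (fun v : ℝ => (b + c * v) ^ (-s - k))
        (c * (-s - k) * (b + c * u) ^ (-s - k - 1)) u :=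
      h1.rpow_const (Or.inl (ne_of_gt hu))
    have h3 : HasDerivAt (fun v : ℝ => c ^ k * (∏ j ∈ Finset.range k, (-s - j)) * (b + c * v) ^ (-s - k))
        (c ^ k * (∏ j ∈ Finset.range k, (-s - j)) * (c * (-s - k) * (b + c * u) ^ (-s - k - 1))) u :=
      h2.const_mul _
    have h4 := h3.ofReal_comp
    rw [h4.deriv]
    rw [Finset.prod_range_succ]
    push_cast
    rw [show (-s - (k + 1) : ℝ) = -s - k - 1 by ring]
    ring

lemma aux_g_contDiffOn (s b c : ℝ) :
    ContDiffOn ℝ (⊤ : ℕ∞) (fun v : ℝ => (((b + c * v) ^ (-s) : ℝ) : ℂ))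
      {v : ℝ | 0 < b + c * v} := by
  intro x hx
  apply ContDiffAt.contDiffWithinAt
  have h1 : ContDiffAt ℝ (⊤ : ℕ∞) (fun v : ℝ => b + c * v) x :=
    (contDiff_const.add (contDiff_const.mul contDiff_id)).contDiffAt
  have h2 : ContDiffAt ℝ (⊤ : ℕ∞) (fun y : ℝ => y ^ (-s)) (b + c * x) :=
    Real.contDiffAt_rpow_const_of_ne (ne_of_gt hx)
  have h3 : ContDiffAt ℝ (⊤ : ℕ∞) (fun v : ℝ => (b + c * v) ^ (-s)) x := h2.comp (g := fun y : ℝ => y ^ (-s)) x h1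
  exact Complex.ofRealCLM.contDiff.contDiffAt.comp x h3

lemma aux_f_contDiff (φ : ℝ → ℂ) (hφ : ContDiff ℝ (⊤ : ℕ∞) φ)
    (hsupp : tsupport φ ⊆ Set.Ioo (1 / 4 : ℝ) 1) (s b c : ℝ)
    (hb : 0 ≤ b) (hc : 0 ≤ c) (hbc : 1/4 ≤ b + c * (1/4)) :
    ContDiff ℝ (⊤ : ℕ∞) (fun v : ℝ => φ v * (((b + c * v) ^ (-s) : ℝ) : ℂ)) := by
  rw [contDiff_iff_contDiffAt]
  intro x
  by_cases hx : 0 < b + c * x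
  · have hUo : IsOpen {v : ℝ | 0 < b + c * v} := isOpen_lt continuous_const (by continuity)
    exact ((hφ.of_le (by simp)).contDiffAt).mul
      ((aux_g_contDiffOn s b c).contDiffAt (hUo.mem_nhds hx))
  · have hxn : x ∉ tsupport φ := by
      intro hmem
      have h1 := (hsupp hmem).1
      exact hx (by nlinarith)
    have hev : (fun v : ℝ => φ v * (((b + c * v) ^ (-s) : ℝ) : ℂ)) =ᶠ[𝓝 x]
        (fun _ => (0:ℂ)) := by
      filter_upwards [(isClosed_tsupport φ).isOpen_compl.mem_nhds hxn] with v hv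
      rw [image_eq_zero_of_notMem_tsupport hv, zero_mul]
    exact contDiffAt_const.congr_of_eventuallyEq hev

lemma aux_master (φ : ℝ → ℂ) (hφ : ContDiff ℝ (⊤ : ℕ∞) φ)
    (hsupp : tsupport φ ⊆ Set.Ioo (1 / 4 : ℝ) 1) (s : ℝ) (hs : 0 < s) (n : ℕ) :
    ∃ K > (0:ℝ), ∀ b c : ℝ, 0 ≤ b → 0 ≤ c → c ≤ 1 → 1/4 ≤ b + c * (1/4) →
      ∀ u : ℝ, ‖iteratedDeriv n (fun v => φ v * (((b + c * v) ^ (-s) : ℝ) : ℂ)) u‖ ≤ K := by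
  have hφc : HasCompactSupport φ := by
    apply HasCompactSupport.intro (isCompact_Icc (a := (1/4:ℝ)) (b := 1))
    intro x hx
    exact image_eq_zero_of_notMem_tsupport fun h => hx (Set.Ioo_subset_Icc_self (hsupp h))
  have hM : ∀ i : ℕ, ∃ Mi ≥ (0:ℝ), ∀ x, ‖iteratedFDeriv ℝ i φ x‖ ≤ Mi := by
    intro i
    obtain ⟨Mi, hMi⟩ := (hφ.continuous_iteratedFDeriv (by exact_mod_cast le_top)).bounded_above_of_compact_support
      (hφc.iteratedFDeriv i)
    exact ⟨max Mi 0, le_max_right _ _, fun x => le_trans (hMi x) (le_max_left _ _)⟩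
  choose M hM0 hMb using hM
  set P : ℕ → ℝ := fun k => |∏ j ∈ Finset.range k, (-s - (j:ℝ))| * (4:ℝ) ^ (s + k) with hP
  have hP0 : ∀ k, 0 ≤ P k := fun k => mul_nonneg (abs_nonneg _) (Real.rpow_nonneg (by norm_num) _)
  have hgbound : ∀ (b c : ℝ), 0 ≤ c → c ≤ 1 → ∀ k : ℕ, ∀ u : ℝ, 1/4 ≤ b + c * u →
      ‖iteratedDeriv k (fun v : ℝ => (((b + c * v) ^ (-s) : ℝ) : ℂ)) u‖ ≤ P k := by
    intro b c hc hc1 k u hu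
    rw [aux_deriv_formula s b c k u (by linarith)]
    rw [Complex.norm_real, Real.norm_eq_abs]
    have h1 : (b + c * u) ^ (-s - (k:ℝ)) ≤ (4:ℝ) ^ (s + k) := by
      have e1 : ((1:ℝ)/4) ^ (-s - (k:ℝ)) = (4:ℝ) ^ (s + (k:ℝ)) := by
        rw [show (1/4 : ℝ) = 4⁻¹ by norm_num, Real.inv_rpow (by norm_num), ← Real.rpow_neg (by norm_num)]
        ring_nf
      calc (b + c * u) ^ (-s - (k:ℝ)) ≤ ((1:ℝ)/4) ^ (-s - (k:ℝ)) :=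
            Real.rpow_le_rpow_of_nonpos (by norm_num) hu
              (by have hk : (0:ℝ) ≤ k := Nat.cast_nonneg k; linarith)
        _ = _ := e1
    rw [abs_mul, abs_mul]
    have hck : |c ^ k| ≤ 1 := by
      rw [abs_pow, abs_of_nonneg hc]; exact pow_le_one₀ hc hc1
    have habs : |(b + c * u) ^ (-s - (k:ℝ))| = (b + c * u) ^ (-s - (k:ℝ)) :=
      abs_of_nonneg (Real.rpow_nonneg (by linarith) _)
    rw [habs]
    calc |c ^ k| * |∏ j ∈ Finset.range k, (-s - (j:ℝ))| * (b + c * u) ^ (-s - (k:ℝ))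
        ≤ 1 * |∏ j ∈ Finset.range k, (-s - (j:ℝ))| * (4:ℝ) ^ (s + k) :=
          mul_le_mul (mul_le_mul hck le_rfl (abs_nonneg _) zero_le_one) h1
            (Real.rpow_nonneg (by linarith) _) (by positivity)
      _ = P k := by rw [one_mul]
  have hsum0 : 0 ≤ ∑ i ∈ Finset.range (n+1), (n.choose i : ℝ) * M i * P (n - i) :=
    Finset.sum_nonneg fun i _ => mul_nonneg (mul_nonneg (by positivity) (hM0 i)) (hP0 _)
  refine ⟨(∑ i ∈ Finset.range (n+1), (n.choose i : ℝ) * M i * P (n - i)) + 1, by linarith, ?_⟩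
  intro b c hb hc hc1 hbc u
  set U : Set ℝ := {v : ℝ | 0 < b + c * v} with hU
  have hUo : IsOpen U := isOpen_lt continuous_const (by continuity)
  have hsubU : tsupport φ ⊆ U := by
    intro v hv
    have h4 := (hsupp hv).1
    show 0 < b + c * v
    nlinarith
  set g : ℝ → ℂ := fun v : ℝ => (((b + c * v) ^ (-s) : ℝ) : ℂ) with hg
  by_cases hu : u ∈ tsupport φ
  · have huU : u ∈ U := hsubU hu
    have h4u : 1/4 ≤ b + c * u := by
      have := (hsupp hu).1; nlinarith
    rw [← norm_iteratedFDeriv_eq_norm_iteratedDeriv,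
      ← iteratedFDerivWithin_of_isOpen n hUo huU]
    have key := norm_iteratedFDerivWithin_mul_le (𝕜 := ℝ) (N := (n : WithTop ℕ∞))
      ((hφ.of_le (by exact_mod_cast le_top)).contDiffOn (s := U)) ((aux_g_contDiffOn s b c).of_le (by exact_mod_cast le_top))
      hUo.uniqueDiffOn huU (le_refl (n : WithTop ℕ∞))
    refine le_trans key (le_trans ?_ (le_add_of_nonneg_right zero_le_one))
    apply Finset.sum_le_sum
    intro i hi
    rw [iteratedFDerivWithin_of_isOpen _ hUo huU, iteratedFDerivWithin_of_isOpen _ hUo huU]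
    have hgb : ‖iteratedFDeriv ℝ (n - i) g u‖ ≤ P (n - i) := by
      rw [norm_iteratedFDeriv_eq_norm_iteratedDeriv]
      exact hgbound b c hc hc1 (n - i) u h4u
    exact mul_le_mul (mul_le_mul_of_nonneg_left (hMb i u) (by positivity)) hgb
      (norm_nonneg _) (mul_nonneg (by positivity) (hM0 i))
  · have hev : (fun v => φ v * g v) =ᶠ[𝓝 u] (fun _ => (0:ℂ)) := by
      filter_upwards [(isClosed_tsupport φ).isOpen_compl.mem_nhds hu] with v hv
      rw [image_eq_zero_of_notMem_tsupport hv, zero_mul]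
    rw [hev.iteratedDeriv_eq]
    rw [show iteratedDeriv n (fun _ : ℝ => (0:ℂ)) u = 0 by
      rw [iteratedDeriv_eq_iteratedFDeriv, iteratedFDeriv_zero_fun]; simp]
    simp only [norm_zero]
    linarith


lemma aux_uniform (φ : ℝ → ℂ) (hφ : ContDiff ℝ (⊤ : ℕ∞) φ)
    (hsupp : tsupport φ ⊆ Set.Ioo (1 / 4 : ℝ) 1) (s : ℝ) (hs : 0 < s) (n : ℕ) :
    ∃ K > (0:ℝ), ∀ (ℓ : ℤ) (u : ℝ),
      ‖iteratedDeriv n (fun v => φ v * (((1 + (2:ℝ)^ℓ * v) ^ (-s) : ℝ) : ℂ)) u‖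
        ≤ K * min 1 ((2:ℝ) ^ (-(ℓ:ℝ) * s)) := by
  obtain ⟨K, hK, hKb⟩ := aux_master φ hφ hsupp s hs n
  refine ⟨K, hK, ?_⟩
  intro ℓ u
  set c : ℝ := (2:ℝ)^ℓ with hcdef
  have hc0 : (0:ℝ) < c := by positivity
  have hcr : c = (2:ℝ) ^ ((ℓ:ℤ):ℝ) := (Real.rpow_intCast 2 ℓ).symm
  have hminr : (2:ℝ) ^ (-(ℓ:ℝ) * s) = c ^ (-s) := by
    rw [hcr, ← Real.rpow_mul (by norm_num)]
    ring_nf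
  rcases le_or_gt ℓ 0 with hl | hl
  · have hc1 : c ≤ 1 := by
      rw [hcr]
      calc (2:ℝ) ^ ((ℓ:ℤ):ℝ) ≤ (2:ℝ) ^ (0:ℝ) :=
            Real.rpow_le_rpow_of_exponent_le one_le_two (by exact_mod_cast hl)
        _ = 1 := Real.rpow_zero 2
    have hmin : min 1 ((2:ℝ) ^ (-(ℓ:ℝ) * s)) = 1 := by
      apply min_eq_left
      rw [hminr]
      calc (1:ℝ) = 1 ^ (-s) := (Real.one_rpow _).symm
        _ ≤ c ^ (-s) := Real.rpow_le_rpow_of_nonpos hc0 hc1 (by linarith)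
    rw [hmin, mul_one]
    exact hKb 1 c zero_le_one hc0.le hc1 (by linarith) u
  · have hc1 : 1 ≤ c := by
      rw [hcr]
      calc (1:ℝ) = (2:ℝ) ^ (0:ℝ) := (Real.rpow_zero 2).symm
        _ ≤ (2:ℝ) ^ ((ℓ:ℤ):ℝ) :=
            Real.rpow_le_rpow_of_exponent_le one_le_two (by exact_mod_cast hl.le)
    have hmin : min 1 ((2:ℝ) ^ (-(ℓ:ℝ) * s)) = c ^ (-s) := by
      rw [hminr]
      exact min_eq_right (Real.rpow_le_one_of_one_le_of_nonpos hc1 (by linarith))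
    rw [hmin]
    have hinv0 : (0:ℝ) ≤ c⁻¹ := by positivity
    have hfe : (fun v : ℝ => φ v * (((1 + c * v) ^ (-s) : ℝ) : ℂ))
        = (c ^ (-s)) • (fun v : ℝ => φ v * (((c⁻¹ + 1 * v) ^ (-s) : ℝ) : ℂ)) := by
      funext v
      simp only [Pi.smul_apply]
      by_cases hv : v ∈ tsupport φ
      · have h14 : 1/4 < v := (hsupp hv).1
        have h1 : (1 + c * v) = c * (c⁻¹ + 1 * v) := by
          field_simp
        rw [h1, Real.mul_rpow hc0.le (by nlinarith : (0:ℝ) ≤ c⁻¹ + 1 * v)]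
        rw [Complex.real_smul]
        push_cast
        ring
      · rw [image_eq_zero_of_notMem_tsupport hv]
        simp
    rw [hfe]
    have hf' : ContDiff ℝ (⊤:ℕ∞) (fun v : ℝ => φ v * (((c⁻¹ + 1 * v) ^ (-s) : ℝ) : ℂ)) :=
      aux_f_contDiff φ hφ hsupp s c⁻¹ 1 hinv0 zero_le_one (by linarith)
    rw [← norm_iteratedFDeriv_eq_norm_iteratedDeriv,
      iteratedFDeriv_const_smul_apply ((hf'.of_le (by exact_mod_cast le_top)).contDiffAt)]
    rw [norm_smul (c ^ (-s)) (iteratedFDeriv ℝ n (fun v : ℝ => φ v * (((c⁻¹ + 1 * v) ^ (-s) : ℝ) : ℂ)) u)]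
    rw [norm_iteratedFDeriv_eq_norm_iteratedDeriv, Real.norm_eq_abs,
      abs_of_nonneg (Real.rpow_nonneg hc0.le _)]
    have hb := hKb c⁻¹ 1 hinv0 zero_le_one le_rfl (by linarith) u
    calc c ^ (-s) * ‖iteratedDeriv n (fun v : ℝ => φ v * (((c⁻¹ + 1 * v) ^ (-s) : ℝ) : ℂ)) u‖
        ≤ c ^ (-s) * K := by
          exact mul_le_mul_of_nonneg_left hb (Real.rpow_nonneg hc0.le _)
      _ = K * c ^ (-s) := by ring

lemma aux_fourier (f : ℝ → ℂ) (hf : ContDiff ℝ (⊤:ℕ∞) f) (hcs : HasCompactSupport f)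
    (a : ℕ) (θ : ℝ) :
    ‖∫ u : ℝ, Complex.exp (Complex.I * θ * u) * f u‖ * |θ| ^ a
      ≤ ∫ u : ℝ, ‖iteratedDeriv a f u‖ := by
  have hInt : ∀ n : ℕ, Integrable (iteratedDeriv n f) := by
    intro n
    apply Continuous.integrable_of_hasCompactSupport
      (hf.continuous_iteratedDeriv n (by exact_mod_cast le_top))
    rw [iteratedDeriv_eq_equiv_comp]
    exact (hcs.iteratedFDeriv n).comp_left (by simp)
  set w : ℝ := -θ / (2 * π) with hwdef
  have hw : (∫ u : ℝ, Complex.exp (Complex.I * θ * u) * f u) = 𝓕 f w := by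
    rw [Real.fourier_real_eq_integral_exp_smul]
    congr 1
    funext v
    have harg : (-2 * π * v * w) = θ * v := by
      rw [hwdef]
      field_simp
    have hexp : Complex.exp (Complex.I * θ * v) = Complex.exp (↑(-2 * π * v * w) * Complex.I) := by
      rw [harg]
      push_cast
      ring_nf
    rw [smul_eq_mul, ← hexp]
  have h2 := Real.fourier_iteratedDeriv (N := (⊤:ℕ∞)) (n := a) hf
    (fun n _ => hInt n) le_top
  have hnw : ‖(2 * ↑π * Complex.I * ↑w : ℂ)‖ = |θ| := by
    simp only [norm_mul, Complex.norm_I, Complex.norm_real, Real.norm_eq_abs]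
    rw [hwdef]
    rw [abs_div, abs_neg]
    have : |2 * π| = 2 * π := abs_of_pos (by positivity)
    simp only [Complex.norm_ofNat]
    rw [this, abs_of_pos Real.pi_pos]
    field_simp
  have h3 : ‖𝓕 (iteratedDeriv a f) w‖ = ‖𝓕 f w‖ * |θ| ^ a := by
    rw [h2]
    simp only []
    rw [norm_smul, norm_pow, hnw, mul_comm]
  calc ‖∫ u : ℝ, Complex.exp (Complex.I * θ * u) * f u‖ * |θ| ^ a
      = ‖𝓕 f w‖ * |θ| ^ a := by rw [hw]
    _ = ‖𝓕 (iteratedDeriv a f) w‖ := h3.symm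
    _ ≤ ∫ u : ℝ, ‖iteratedDeriv a f u‖ :=
        VectorFourier.norm_fourierIntegral_le_integral_norm _ _ _ _ _

lemma aux_L1 (g : ℝ → ℂ) (hg : Continuous g) (hsup : ∀ u, u ∉ Set.Icc (1/4:ℝ) 1 → g u = 0)
    (B : ℝ) (hB : ∀ u, ‖g u‖ ≤ B) : (∫ u : ℝ, ‖g u‖) ≤ B := by
  have hB0 : 0 ≤ B := le_trans (norm_nonneg (g 0)) (hB 0)
  have h1 : (∫ u : ℝ, ‖g u‖) = ∫ u in Set.Icc (1/4:ℝ) 1, ‖g u‖ :=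
    (setIntegral_eq_integral_of_forall_compl_eq_zero
      (fun x hx => by rw [hsup x hx, norm_zero])).symm
  rw [h1]
  calc (∫ u in Set.Icc (1/4:ℝ) 1, ‖g u‖) ≤ ‖∫ u in Set.Icc (1/4:ℝ) 1, ‖g u‖‖ := le_abs_self _
    _ ≤ B * (volume (Set.Icc (1/4:ℝ) 1)).toReal :=
        norm_setIntegral_le_of_norm_le_const measure_Icc_lt_top
          (fun x _ => by simpa using hB x)
    _ ≤ B * 1 := by
        apply mul_le_mul_of_nonneg_left _ hB0
        rw [Real.volume_Icc]
        rw [ENNReal.toReal_ofReal (by norm_num)]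
        norm_num
    _ = B := mul_one B


/-- Stationary-phase type bound: if `φ` is smooth with compact support in
`(1/4, 1)` and `s > 0`, then for every `a ∈ ℕ` there is `C > 0` such that for all `ℓ ∈ ℤ`
and `t, τ ∈ ℝ`,
`|∫ φ(u) e^{i(2^ℓ t - τ)u} (1 + 2^ℓ u)^{-s} du| ≤ C min{1, 2^{-ℓ s}} (1 + |2^ℓ t - τ|)^{-a}`. -/
theorem oscillatory_integral_decay
    (φ : ℝ → ℂ) (hφ : ContDiff ℝ (⊤ : ℕ∞) φ) (hsupp : tsupport φ ⊆ Set.Ioo (1 / 4 : ℝ) 1)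
    (s : ℝ) (hs : 0 < s) :
    ∀ a : ℕ, ∃ C > (0 : ℝ),
      ∀ (ℓ : ℤ) (t τ : ℝ),
        ‖(∫ u : ℝ, φ u * Complex.exp (Complex.I * ((2 : ℝ) ^ ℓ * t - τ) * u) *
              (((1 + (2 : ℝ) ^ ℓ * u) ^ (-s) : ℝ) : ℂ))‖ ≤
          C * min 1 ((2 : ℝ) ^ (-(ℓ : ℝ) * s)) * (1 + |(2 : ℝ) ^ ℓ * t - τ|) ^ (-(a : ℝ)) := by
  intro a
  obtain ⟨K0, hK00, hK0b⟩ := aux_uniform φ hφ hsupp s hs 0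
  obtain ⟨Ka, hKa0, hKab⟩ := aux_uniform φ hφ hsupp s hs a
  set K : ℝ := max K0 Ka with hKdef
  have hKpos : 0 < K := lt_of_lt_of_le hK00 (le_max_left _ _)
  refine ⟨(K + 1) * 2 ^ a, by positivity, ?_⟩
  intro ℓ t τ
  have hI : (∫ u : ℝ, φ u * Complex.exp (Complex.I * ((2 : ℝ) ^ ℓ * t - τ) * u) *
        (((1 + (2 : ℝ) ^ ℓ * u) ^ (-s) : ℝ) : ℂ))
      = ∫ u : ℝ, Complex.exp (Complex.I * (((2:ℝ)^ℓ * t - τ : ℝ) : ℂ) * u) *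
        ((fun v : ℝ => φ v * (((1 + (2:ℝ)^ℓ * v) ^ (-s) : ℝ) : ℂ)) u) := by
    congr 1
    funext u
    push_cast
    ring
  rw [hI]
  set θ : ℝ := (2:ℝ)^ℓ * t - τ with hθdef
  set c : ℝ := (2:ℝ)^ℓ with hcdef
  have hc0 : (0:ℝ) < c := by positivity
  set f : ℝ → ℂ := fun v => φ v * (((1 + c * v) ^ (-s) : ℝ) : ℂ) with hfdef
  set m : ℝ := min 1 ((2:ℝ)^(-(ℓ:ℝ)*s)) with hmdef
  have hm0 : 0 < m := lt_min one_pos (Real.rpow_pos_of_pos two_pos _)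
  -- properties of f
  have hfc : ContDiff ℝ (⊤:ℕ∞) f :=
    aux_f_contDiff φ hφ hsupp s 1 c zero_le_one hc0.le (by linarith)
  have hfz : ∀ u, u ∉ tsupport φ → f u = 0 := by
    intro u hu
    rw [hfdef]
    simp only []
    rw [image_eq_zero_of_notMem_tsupport hu, zero_mul]
  have hcs : HasCompactSupport f := by
    apply HasCompactSupport.intro (isCompact_Icc (a := (1/4:ℝ)) (b := 1))
    intro x hx
    exact hfz x fun h => hx (Set.Ioo_subset_Icc_self (hsupp h))
  have hzd : ∀ (k : ℕ) (u : ℝ), u ∉ Set.Icc (1/4:ℝ) 1 → iteratedDeriv k f u = 0 := by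
    intro k u hu
    have hun : u ∉ tsupport φ := fun h => hu (Set.Ioo_subset_Icc_self (hsupp h))
    have hev : f =ᶠ[𝓝 u] (fun _ => (0:ℂ)) := by
      filter_upwards [(isClosed_tsupport φ).isOpen_compl.mem_nhds hun] with v hv
      exact hfz v hv
    rw [hev.iteratedDeriv_eq, show iteratedDeriv k (fun _ : ℝ => (0:ℂ)) u = 0 by
      rw [iteratedDeriv_eq_iteratedFDeriv, iteratedFDeriv_zero_fun]; simp]
  -- L1 bounds
  have hL1 : ∀ k : ℕ, (∀ u : ℝ, ‖iteratedDeriv k f u‖ ≤ K * m) →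
      (∫ u : ℝ, ‖iteratedDeriv k f u‖) ≤ K * m := by
    intro k hk
    exact aux_L1 _ (hfc.continuous_iteratedDeriv k (by exact_mod_cast le_top)) (hzd k) _ hk
  have hbd0 : ∀ u : ℝ, ‖iteratedDeriv 0 f u‖ ≤ K * m := fun u =>
    le_trans (hK0b ℓ u) (mul_le_mul_of_nonneg_right (le_max_left _ _) hm0.le)
  have hbda : ∀ u : ℝ, ‖iteratedDeriv a f u‖ ≤ K * m := fun u =>
    le_trans (hKab ℓ u) (mul_le_mul_of_nonneg_right (le_max_right _ _) hm0.le)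
  have hL10 : (∫ u : ℝ, ‖f u‖) ≤ K * m := by
    have := hL1 0 hbd0
    simpa [iteratedDeriv_zero] using this
  have hL1a : (∫ u : ℝ, ‖iteratedDeriv a f u‖) ≤ K * m := hL1 a hbda
  have hθ0 : (0:ℝ) ≤ |θ| := abs_nonneg θ
  have hrp : (1 + |θ|) ^ (-(a:ℝ)) = ((1 + |θ|)^a)⁻¹ := by
    rw [← Real.rpow_natCast (1 + |θ|) a, ← Real.rpow_neg (by linarith)]
  rw [hrp]
  have hXpos : (0:ℝ) < (1 + |θ|)^a := by positivity
  rcases le_or_gt (|θ|) 1 with hθ | hθ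
  · have h1 : ‖∫ u : ℝ, Complex.exp (Complex.I * θ * u) * f u‖ ≤ ∫ u : ℝ, ‖f u‖ := by
      refine le_trans (norm_integral_le_integral_norm _) (le_of_eq ?_)
      congr 1
      funext u
      rw [norm_mul]
      have : Complex.I * θ * u = ((θ * u : ℝ) : ℂ) * Complex.I := by push_cast; ring
      rw [this, Complex.norm_exp_ofReal_mul_I, one_mul]
    have h3 : ((1:ℝ) + |θ|)^a ≤ 2^a := pow_le_pow_left₀ (by linarith) (by linarith) a
    have h5 : ((2:ℝ)^a)⁻¹ ≤ ((1 + |θ|)^a)⁻¹ := by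
      gcongr
    calc ‖∫ u : ℝ, Complex.exp (Complex.I * θ * u) * f u‖ ≤ K * m := le_trans h1 hL10
      _ ≤ (K + 1) * m := mul_le_mul_of_nonneg_right (by linarith) hm0.le
      _ = (K + 1) * 2^a * m * ((2:ℝ)^a)⁻¹ := by
          field_simp
      _ ≤ (K + 1) * 2^a * m * ((1 + |θ|)^a)⁻¹ := by
          apply mul_le_mul_of_nonneg_left h5
          positivity
  · have hθp : (0:ℝ) < |θ|^a := by positivity
    have h2 : ‖∫ u : ℝ, Complex.exp (Complex.I * θ * u) * f u‖ ≤ K * m / |θ|^a := by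
      rw [le_div_iff₀ hθp]
      exact le_trans (aux_fourier f hfc hcs a θ) hL1a
    have h3 : ((1:ℝ) + |θ|)^a ≤ 2^a * |θ|^a := by
      rw [← mul_pow]
      exact pow_le_pow_left₀ (by linarith) (by linarith) a
    have h5 : ((2:ℝ)^a * |θ|^a)⁻¹ ≤ ((1 + |θ|)^a)⁻¹ := by
      gcongr
    calc ‖∫ u : ℝ, Complex.exp (Complex.I * θ * u) * f u‖ ≤ K * m / |θ|^a := h2
      _ ≤ (K + 1) * m / |θ|^a := by
          gcongr
          linarith
      _ = (K + 1) * 2^a * m * ((2:ℝ)^a * |θ|^a)⁻¹ := by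
          field_simp
      _ ≤ (K + 1) * 2^a * m * ((1 + |θ|)^a)⁻¹ := by
          apply mul_le_mul_of_nonneg_left h5
          positivity
end
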